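/- arXiv:0910.0824 — 11 statements merged into one kernel-verified Lean document; each statement's English description precedes it below -/
import Mathlib

section
/- Let X be a normal topological space with Lebesgue covering dimension at most n. For any continuous map f : X → ℝ^{n+1} and any continuous function ε : X → ℝ with ε(x) > 0 for all x, there exists a continuous map g : X → ℝ^{n+1} such that for all x ∈ X, ‖g(x) − f(x)‖ < ε(x) and g(x) ≠ 0. -/
/-!
Cover `X` by countably many open sets `U k` on which `f` stays within `r k` of a point `p k`,
where `2 * r k < ε`. Refine this cover to one of order at most `n + 1`, choose `y k` in the ball
around `p k` so that any `n + 1` of the `y k` are linearly independent, and glue the `y k` with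
Urysohn functions. Then `g x` is a convex combination, with positive total weight, of at most
`n + 1` of the `y k`, all of which lie in the convex ball of radius `ε x` around `f x`; by
linear independence it is nonzero.
-/

open Set Submodule Module Metric

/-- Covering dimension at most `n`: every open cover has an open refinement in which
each point lies in at most `n + 1` members. -/
def CovDimLE (X : Type) [TopologicalSpace X] (n : ℕ) : Prop :=
  ∀ 𝒰 : Set (Set X), (∀ U ∈ 𝒰, IsOpen U) → ⋃₀ 𝒰 = Set.univ →
    ∃ 𝒱 : Set (Set X), (∀ V ∈ 𝒱, IsOpen V) ∧ ⋃₀ 𝒱 = Set.univ ∧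
      (∀ V ∈ 𝒱, ∃ U ∈ 𝒰, V ⊆ U) ∧
      ∀ x : X, {V ∈ 𝒱 | x ∈ V}.Finite ∧ {V ∈ 𝒱 | x ∈ V}.ncard ≤ n + 1

noncomputable def seqOfForallPrefixExists {α : Type*} (Q : (k : ℕ) → (Fin k → α) → α → Prop)
    (h : ∀ k p, ∃ a, Q k p a) : ℕ → α
  | k => Classical.choose (h k fun j : Fin k => seqOfForallPrefixExists Q h j)
decreasing_by exact j.isLt

theorem exists_seq_of_forall_prefix_exists {α : Type*} (Q : (k : ℕ) → (Fin k → α) → α → Prop)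
    (h : ∀ k p, ∃ a, Q k p a) : ∃ f : ℕ → α, ∀ k, Q k (fun j : Fin k => f j) (f k) :=
  ⟨seqOfForallPrefixExists Q h, fun k => by
    rw [seqOfForallPrefixExists]
    exact Classical.choose_spec _⟩

theorem Submodule.dense_compl_of_ne_top {𝕜 E : Type*} [NontriviallyNormedField 𝕜]
    [AddCommGroup E] [TopologicalSpace E] [ContinuousAdd E] [Module 𝕜 E] [ContinuousSMul 𝕜 E]
    {p : Submodule 𝕜 E} (hp : p ≠ ⊤) : Dense (p : Set E)ᶜ :=
  interior_eq_empty_iff_dense_compl.1 <|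
    not_nonempty_iff_eq_empty.1 fun h => hp (p.eq_top_of_nonempty_interior' h)

section GeneralPosition

variable {𝕜 E : Type*} [NontriviallyNormedField 𝕜] [CompleteSpace 𝕜]
  [NormedAddCommGroup E] [NormedSpace 𝕜 E] [FiniteDimensional 𝕜 E]

theorem exists_mem_forall_notMem_span_of_card_lt (A : Finset E) {O : Set E} (hO : IsOpen O)
    (hO' : O.Nonempty) :
    ∃ x ∈ O, ∀ S ⊆ A, S.card < finrank 𝕜 E → x ∉ span 𝕜 (S : Set E) := by
  have : CompleteSpace E := FiniteDimensional.complete 𝕜 E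
  have hdense : Dense (⋂ S ∈ {S ∈ A.powerset | S.card < finrank 𝕜 E},
      (span 𝕜 (S : Set E) : Set E)ᶜ) := by
    refine dense_biInter_of_isOpen (fun S _ => (span 𝕜 _).closed_of_finiteDimensional.isOpen_compl)
      (Finset.countable_toSet _) fun S hS => dense_compl_of_ne_top fun htop => ?_
    have := finrank_span_finset_le_card (R := 𝕜) S
    rw [Set.finrank, htop, finrank_top] at this
    have := (Finset.mem_filter.1 hS).2
    omega
  obtain ⟨x, hxO, hx⟩ := hdense.inter_open_nonempty O hO hO'
  refine ⟨x, hxO, fun S hSA hS => ?_⟩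
  simpa using mem_iInter₂.1 hx S (by simpa using ⟨hSA, hS⟩)

theorem exists_seq_mem_forall_linearIndepOn {O : ℕ → Set E} (hO : ∀ k, IsOpen (O k))
    (hO' : ∀ k, (O k).Nonempty) :
    ∃ y : ℕ → E, (∀ k, y k ∈ O k) ∧
      ∀ T : Finset ℕ, T.card ≤ finrank 𝕜 E → LinearIndepOn 𝕜 y T := by
  classical
  obtain ⟨y, hy⟩ := exists_seq_of_forall_prefix_exists
    (fun k (p : Fin k → E) a => a ∈ O k ∧
      ∀ S : Finset E, ↑S ⊆ range p → S.card < finrank 𝕜 E → a ∉ span 𝕜 (S : Set E))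
    fun k p => by
      obtain ⟨a, haO, ha⟩ :=
        exists_mem_forall_notMem_span_of_card_lt (𝕜 := 𝕜) (Finset.univ.image p) (hO k) (hO' k)
      exact ⟨a, haO, fun S hS => ha S fun z hz => by simpa using hS hz⟩
  refine ⟨y, fun k => (hy k).1, fun T => ?_⟩
  induction T using Finset.induction_on_max with
  | empty => simp
  | insert a s hlt ih =>
    intro hcard
    have has : a ∉ s := fun h => lt_irrefl a (hlt a h)
    rw [Finset.card_insert_of_notMem has] at hcard
    rw [Finset.coe_insert, linearIndepOn_insert (by simpa), ← Finset.coe_image]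
    refine ⟨ih (by omega), (hy a).2 _ ?_ (Finset.card_image_le.trans_lt (by omega))⟩
    intro z hz
    obtain ⟨j, hj, rfl⟩ := Finset.mem_image.1 hz
    exact ⟨⟨j, hlt j hj⟩, rfl⟩

end GeneralPosition

theorem LinearIndepOn.centerMass_ne_zero {R ι M : Type*} [Field R] [AddCommGroup M] [Module R M]
    {y : ι → M} {T : Finset ι} {w : ι → R} (h : LinearIndepOn R y T) (hw : ∑ i ∈ T, w i ≠ 0) :
    T.centerMass w y ≠ 0 := by
  rw [Finset.centerMass, smul_ne_zero_iff]
  exact ⟨inv_ne_zero hw, fun h0 => hw (Finset.sum_eq_zero (linearIndepOn_finset_iff.1 h w h0))⟩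

theorem CovDimLE.exists_pointFinite_refinement {X : Type} [TopologicalSpace X] {n : ℕ}
    (h : CovDimLE X n) {ι : Type*} (U : ι → Set X) (hUo : ∀ i, IsOpen (U i))
    (hUc : ⋃ i, U i = univ) :
    ∃ W : ι → Set X, (∀ i, IsOpen (W i)) ∧ ⋃ i, W i = univ ∧ (∀ i, W i ⊆ U i) ∧
      ∀ x, {i | x ∈ W i}.Finite ∧ {i | x ∈ W i}.ncard ≤ n + 1 := by
  rcases isEmpty_or_nonempty ι with _ | _
  · exact ⟨U, hUo, hUc, fun _ => subset_rfl, fun x => by simp [eq_empty_of_isEmpty]⟩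
  obtain ⟨𝒱, hVo, hVc, hVU, hVx⟩ := h (range U) (forall_mem_range.2 hUo) (by rwa [sUnion_range])
  have : ∀ V ∈ 𝒱, ∃ i, V ⊆ U i := fun V hV => by
    obtain ⟨_, ⟨i, rfl⟩, hi⟩ := hVU V hV
    exact ⟨i, hi⟩
  choose! idx hidx using this
  refine ⟨fun i => ⋃₀ {V ∈ 𝒱 | idx V = i}, fun i => isOpen_sUnion fun V hV => hVo V hV.1,
    eq_univ_of_forall fun x => ?_, ?_, fun x => ?_⟩
  · obtain ⟨V, hV, hxV⟩ := hVc ▸ mem_univ x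
    exact mem_iUnion.2 ⟨idx V, V, ⟨hV, rfl⟩, hxV⟩
  · rintro i x ⟨V, ⟨hV, rfl⟩, hxV⟩
    exact hidx V hV hxV
  · have hsub : {i | x ∈ ⋃₀ {V ∈ 𝒱 | idx V = i}} ⊆ idx '' {V ∈ 𝒱 | x ∈ V} := by
      rintro i ⟨V, ⟨hV, rfl⟩, hxV⟩
      exact ⟨V, ⟨hV, hxV⟩, rfl⟩
    have hfin := (hVx x).1.image idx
    exact ⟨hfin.subset hsub,
      (ncard_le_ncard hsub hfin).trans ((ncard_image_le (hVx x).1).trans (hVx x).2)⟩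

theorem exists_continuous_zero_one_of_pointFinite_cover {X ι : Type*} [TopologicalSpace X]
    [NormalSpace X] {W : ι → Set X} (hWo : ∀ i, IsOpen (W i)) (hWc : ⋃ i, W i = univ)
    (hWf : ∀ x, {i | x ∈ W i}.Finite) :
    ∃ φ : ι → C(X, ℝ), (∀ i, ∀ x ∉ W i, φ i x = 0) ∧ (∀ i x, φ i x ∈ Icc (0 : ℝ) 1) ∧
      ∀ x, ∃ i, φ i x = 1 := by
  obtain ⟨V, hVc, -, hVW⟩ :=
    exists_subset_iUnion_closure_subset isClosed_univ hWo (fun x _ => hWf x) hWc.ge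
  have : ∀ i, ∃ φ : C(X, ℝ), EqOn φ 0 (W i)ᶜ ∧ EqOn φ 1 (closure (V i)) ∧
      ∀ x, φ x ∈ Icc (0 : ℝ) 1 := fun i =>
    exists_continuous_zero_one_of_isClosed (hWo i).isClosed_compl isClosed_closure
      (disjoint_compl_left_iff_subset.2 (hVW i))
  choose φ hφ0 hφ1 hφ01 using this
  refine ⟨φ, fun i x hx => hφ0 i hx, hφ01, fun x => ?_⟩
  obtain ⟨i, hi⟩ := mem_iUnion.1 (hVc (mem_univ x))
  exact ⟨i, hφ1 i (subset_closure hi)⟩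

theorem exists_pos_summable_norm_smul {E : Type*} [SeminormedAddCommGroup E] [NormedSpace ℝ E]
    (v : ℕ → E) :
    ∃ a : ℕ → ℝ, (∀ k, 0 < a k) ∧ Summable a ∧ Summable fun k => ‖a k • v k‖ := by
  refine ⟨fun k => (1 / 2) ^ k / (1 + ‖v k‖), fun k => by positivity, ?_, ?_⟩
  · refine summable_geometric_two.of_nonneg_of_le (fun k => by positivity) fun k => ?_
    exact div_le_self (by positivity) (by linarith [norm_nonneg (v k)])
  · refine summable_geometric_two.of_nonneg_of_le (fun k => norm_nonneg _) fun k => ?_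
    rw [norm_smul, Real.norm_of_nonneg (by positivity), div_mul_eq_mul_div]
    exact div_le_of_le_mul₀ (by positivity) (by positivity)
      (mul_le_mul_of_nonneg_left (by linarith) (by positivity))

theorem continuous_tsum_smul {X E : Type*} [TopologicalSpace X] [NormedAddCommGroup E]
    [NormedSpace ℝ E] [CompleteSpace E] {φ : ℕ → X → ℝ} (hφ : ∀ k, Continuous (φ k))
    (hφ1 : ∀ k x, ‖φ k x‖ ≤ 1) {v : ℕ → E} (hv : Summable fun k => ‖v k‖) :
    Continuous fun x => ∑' k, φ k x • v k :=
  continuous_tsum (fun k => (hφ k).smul continuous_const) hv fun k x => by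
    rw [norm_smul]
    exact mul_le_of_le_one_left (norm_nonneg _) (hφ1 k x)

theorem exists_continuous_forall_eq_centerMass {X E : Type*} [TopologicalSpace X] [NormalSpace X]
    [NormedAddCommGroup E] [NormedSpace ℝ E] [CompleteSpace E] {W : ℕ → Set X}
    (hWo : ∀ k, IsOpen (W k)) (hWc : ⋃ k, W k = univ) (hWf : ∀ x, {k | x ∈ W k}.Finite)
    (y : ℕ → E) :
    ∃ g : X → E, Continuous g ∧ ∀ x, ∃ (T : Finset ℕ) (w : ℕ → ℝ), (∀ k ∈ T, x ∈ W k) ∧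
      (∀ k ∈ T, 0 ≤ w k) ∧ 0 < ∑ k ∈ T, w k ∧ g x = T.centerMass w y := by
  obtain ⟨φ, hφW, hφ01, hφ1⟩ := exists_continuous_zero_one_of_pointFinite_cover hWo hWc hWf
  -- `W` is only point-finite, so the damping weights `a` are what makes both series continuous.
  obtain ⟨a, ha, has, hay⟩ := exists_pos_summable_norm_smul y
  have hφle : ∀ k x, ‖φ k x‖ ≤ 1 := fun k x => by
    rw [Real.norm_of_nonneg (hφ01 k x).1]
    exact (hφ01 k x).2
  have hzero : ∀ x, ∀ k ∉ (hWf x).toFinset, φ k x = 0 := fun x k hk =>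
    hφW k x (by simpa using hk)
  have hsum : ∀ x, ∑' k, φ k x • a k = ∑ k ∈ (hWf x).toFinset, φ k x * a k := fun x =>
    tsum_eq_sum fun k hk => by rw [hzero x k hk, zero_smul]
  have hpos : ∀ x, 0 < ∑ k ∈ (hWf x).toFinset, φ k x * a k := fun x => by
    obtain ⟨k, hk⟩ := hφ1 x
    refine Finset.sum_pos' (fun k _ => mul_nonneg (hφ01 k x).1 (ha k).le)
      ⟨k, ?_, by rw [hk, one_mul]; exact ha k⟩
    by_contra hkx
    simp [hzero x k hkx] at hk
  have hs : Continuous fun x => ∑' k, φ k x • a k :=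
    continuous_tsum_smul (fun k => (φ k).continuous) hφle (by simpa using has.abs)
  have hv : Continuous fun x => ∑' k, φ k x • a k • y k :=
    continuous_tsum_smul (fun k => (φ k).continuous) hφle hay
  refine ⟨fun x => (∑' k, φ k x • a k)⁻¹ • ∑' k, φ k x • a k • y k,
    (hs.inv₀ fun x => (hsum x ▸ hpos x).ne').smul hv, fun x =>
      ⟨(hWf x).toFinset, fun k => φ k x * a k, fun k hk => by simpa using hk,
        fun k _ => mul_nonneg (hφ01 k x).1 (ha k).le, hpos x, ?_⟩⟩
  dsimp only
  rw [hsum, tsum_eq_sum fun k hk => by rw [hzero x k hk, zero_smul], Finset.centerMass]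
  simp only [smul_smul]

theorem exists_nat_openCover_ball_subset {X E : Type*} [TopologicalSpace X] [PseudoMetricSpace E]
    [TopologicalSpace.SeparableSpace E] [Nonempty E] {f : X → E} (hf : Continuous f)
    {ε : X → ℝ} (hε : Continuous ε) (hεpos : ∀ x, 0 < ε x) :
    ∃ (U : ℕ → Set X) (p : ℕ → E) (r : ℕ → ℝ), (∀ k, IsOpen (U k)) ∧ ⋃ k, U k = univ ∧
      (∀ k, 0 < r k) ∧ ∀ k, ∀ x ∈ U k, ball (p k) (r k) ⊆ ball (f x) (ε x) := by
  set p : ℕ → E := fun k => TopologicalSpace.denseSeq E k.unpair.1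
  set r : ℕ → ℝ := fun k => 1 / (k.unpair.2 + 1)
  refine ⟨fun k => {x | dist (f x) (p k) < r k ∧ 2 * r k < ε x}, p, r,
    fun k => (isOpen_lt (hf.dist continuous_const) continuous_const).inter
      (isOpen_lt continuous_const hε),
    eq_univ_of_forall fun x => ?_, fun k => Nat.one_div_pos_of_nat, ?_⟩
  · obtain ⟨j, hj⟩ := exists_nat_one_div_lt (half_pos (hεpos x))
    obtain ⟨m, hm⟩ := (TopologicalSpace.denseRange_denseSeq E).exists_dist_lt (f x)
      (Nat.one_div_pos_of_nat (n := j))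
    refine mem_iUnion.2 ⟨Nat.pair m j, ?_, ?_⟩ <;> simp only [p, r, Nat.unpair_pair]
    · exact hm
    · linarith
  · rintro k x ⟨hxk, hrε⟩ z hz
    rw [mem_ball] at hz ⊢
    linarith [dist_triangle_right z (f x) (p k)]

theorem stmt_0 (n : ℕ) (X : Type) [TopologicalSpace X] [NormalSpace X]
    (hdim : CovDimLE X n)
    (f : X → EuclideanSpace ℝ (Fin (n + 1))) (hf : Continuous f)
    (ε : X → ℝ) (hε : Continuous ε) (hεpos : ∀ x, 0 < ε x) :
    ∃ g : X → EuclideanSpace ℝ (Fin (n + 1)), Continuous g ∧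
      ∀ x, ‖g x - f x‖ < ε x ∧ g x ≠ 0 := by
  obtain ⟨U, p, r, hUo, hUc, hr, hball⟩ := exists_nat_openCover_ball_subset hf hε hεpos
  obtain ⟨W, hWo, hWc, hWU, hWx⟩ := hdim.exists_pointFinite_refinement U hUo hUc
  obtain ⟨y, hyr, hy⟩ := exists_seq_mem_forall_linearIndepOn (𝕜 := ℝ)
    (fun k => isOpen_ball (x := p k)) fun k => nonempty_ball.2 (hr k)
  obtain ⟨g, hg, hgx⟩ := exists_continuous_forall_eq_centerMass hWo hWc (fun x => (hWx x).1) y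
  refine ⟨g, hg, fun x => ?_⟩
  obtain ⟨T, w, hTW, hw0, hw, hgT⟩ := hgx x
  have hTcard : T.card ≤ finrank ℝ (EuclideanSpace ℝ (Fin (n + 1))) := by
    rw [finrank_euclideanSpace_fin, ← ncard_coe_finset]
    exact (ncard_le_ncard hTW (hWx x).1).trans (hWx x).2
  rw [← dist_eq_norm, ← mem_ball, hgT]
  exact ⟨(convex_ball _ _).centerMass_mem hw0 hw fun k hk => hball k x (hWU k (hTW k hk)) (hyr k),
    (hy T hTcard).centerMass_ne_zero hw.ne'⟩
end

section
/- Let X be a normal space with covering dimension at most n, let U₁,…,U_{n+1} be open subsets of X and F₁,…,F_{n+1} closed subsets with F_i ⊆ U_i for each i. Then there exist open sets V₁,…,V_{n+1} and W₁,…,W_{n+1} with F_i ⊆ V_i ⊆ closure(V_i) ⊆ W_i ⊆ U_i for all i, and the intersection over i of (closure(W_i) \ V_i) is empty. -/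
/-!
Pick open `B i` with `F i ⊆ B i` and `closure (B i) ⊆ U i`. The `n + 2` open sets `U i` and
`⋂ i, (closure (B i))ᶜ` cover `X`, and dimension `≤ n` yields an open shrinking `D` of this cover
whose closures have order `≤ n + 1`. Put `V i = B i ∪ D (some i)`. A point on every frontier of a
`V i` lies in no `D (some i)`, hence in `D none`, hence outside every `closure (B i)`, hence in
every `closure (D (some i))`: it would lie in all `n + 2` closures. So the frontiers have empty
intersection; being closed, they can be thickened in the normal space `X` to open sets `P i` with
empty intersection, and `W i` is chosen with
`closure (V i) ⊆ W i ⊆ closure (W i) ⊆ (V i ∪ P i) ∩ U i`.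
-/

open Set

theorem exists_isOpen_superset_iInter_eq_empty {X ι : Type*} [TopologicalSpace X] [NormalSpace X]
    [Finite ι] {K : ι → Set X} (hK : ∀ i, IsClosed (K i)) (hKe : ⋂ i, K i = ∅) :
    ∃ P : ι → Set X, (∀ i, IsOpen (P i)) ∧ (∀ i, K i ⊆ P i) ∧ ⋂ i, P i = ∅ := by
  have hcov : ⋃ i, (K i)ᶜ = univ := by rw [← compl_iInter, hKe, compl_empty]
  obtain ⟨Q, hQcov, -, hQK⟩ :=
    exists_iUnion_eq_closure_subset (fun i => (hK i).isOpen_compl) (fun _ => toFinite _) hcov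
  refine ⟨fun i => (closure (Q i))ᶜ, fun i => isClosed_closure.isOpen_compl,
    fun i => subset_compl_comm.1 (hQK i), ?_⟩
  rw [← compl_iUnion, compl_empty_iff, ← univ_subset_iff, ← hQcov]
  exact iUnion_mono fun i => subset_closure

namespace CovDimLE

variable {X : Type} [TopologicalSpace X] {n : ℕ}

theorem exists_subset_ncard_le (hdim : CovDimLE X n) {ι : Type*} [Finite ι] {C : ι → Set X}
    (hC : ∀ k, IsOpen (C k)) (hcov : ⋃ k, C k = univ) :
    ∃ E : ι → Set X, (∀ k, IsOpen (E k)) ∧ ⋃ k, E k = univ ∧ (∀ k, E k ⊆ C k) ∧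
      ∀ x, {k | x ∈ E k}.ncard ≤ n + 1 := by
  rcases isEmpty_or_nonempty ι with _ | _
  · exact ⟨C, hC, hcov, fun k => subset_rfl, fun x => by simp [eq_empty_of_isEmpty]⟩
  obtain ⟨𝒱, h𝒱o, h𝒱cov, h𝒱C, h𝒱ord⟩ :=
    hdim (range C) (forall_mem_range.2 hC) (by rwa [sUnion_range])
  have hindex : ∀ V ∈ 𝒱, ∃ k, V ⊆ C k := fun V hV => by
    obtain ⟨_, ⟨k, rfl⟩, hVk⟩ := h𝒱C V hV
    exact ⟨k, hVk⟩
  choose! g hg using hindex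
  refine ⟨fun k => ⋃₀ {V ∈ 𝒱 | g V = k}, fun k => isOpen_sUnion fun V hV => h𝒱o V hV.1,
    ?_, ?_, fun x => ?_⟩
  · refine eq_univ_of_forall fun x => ?_
    obtain ⟨V, hV, hxV⟩ := h𝒱cov ▸ mem_univ x
    exact mem_iUnion.2 ⟨g V, V, ⟨hV, rfl⟩, hxV⟩
  · rintro k x ⟨V, ⟨hV, rfl⟩, hxV⟩
    exact hg V hV hxV
  · have hsub : {k | x ∈ ⋃₀ {V ∈ 𝒱 | g V = k}} ⊆ g '' {V ∈ 𝒱 | x ∈ V} := by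
      rintro k ⟨V, ⟨hV, rfl⟩, hxV⟩
      exact ⟨V, ⟨hV, hxV⟩, rfl⟩
    calc _ ≤ (g '' {V ∈ 𝒱 | x ∈ V}).ncard := ncard_le_ncard hsub ((h𝒱ord x).1.image g)
      _ ≤ _ := (ncard_image_le (h𝒱ord x).1).trans (h𝒱ord x).2

variable [NormalSpace X]

theorem exists_closure_subset_ncard_le (hdim : CovDimLE X n) {ι : Type*} [Finite ι]
    {C : ι → Set X} (hC : ∀ k, IsOpen (C k)) (hcov : ⋃ k, C k = univ) :
    ∃ D : ι → Set X, (∀ k, IsOpen (D k)) ∧ ⋃ k, D k = univ ∧ (∀ k, closure (D k) ⊆ C k) ∧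
      ∀ x, {k | x ∈ closure (D k)}.ncard ≤ n + 1 := by
  obtain ⟨E, hEo, hEcov, hEC, hEord⟩ := hdim.exists_subset_ncard_le hC hcov
  obtain ⟨D, hDcov, hDo, hDE⟩ := exists_iUnion_eq_closure_subset hEo (fun _ => toFinite _) hEcov
  exact ⟨D, hDo, hDcov, fun k => (hDE k).trans (hEC k),
    fun x => (ncard_le_ncard fun k hk => hDE k hk).trans (hEord x)⟩

theorem exists_iInter_frontier_eq_empty (hdim : CovDimLE X n) {U F : Fin (n + 1) → Set X}
    (hU : ∀ i, IsOpen (U i)) (hF : ∀ i, IsClosed (F i)) (hFU : ∀ i, F i ⊆ U i) :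
    ∃ V : Fin (n + 1) → Set X, (∀ i, IsOpen (V i)) ∧ (∀ i, F i ⊆ V i) ∧
      (∀ i, closure (V i) ⊆ U i) ∧ ⋂ i, frontier (V i) = ∅ := by
  choose B hBo hFB hBU using fun i => normal_exists_closure_subset (hF i) (hU i) (hFU i)
  set C : Option (Fin (n + 1)) → Set X := fun k => k.elim (⋂ i, (closure (B i))ᶜ) U
  have hCo : ∀ k, IsOpen (C k) := by
    rintro (_ | i)
    · exact isOpen_iInter_of_finite fun i => isClosed_closure.isOpen_compl
    · exact hU i
  have hCcov : ⋃ k, C k = univ := by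
    refine eq_univ_of_forall fun x => mem_iUnion.2 ?_
    by_cases hx : ∃ i, x ∈ closure (B i)
    · obtain ⟨i, hi⟩ := hx
      exact ⟨some i, hBU i hi⟩
    · exact ⟨none, mem_iInter.2 fun i hi => hx ⟨i, hi⟩⟩
  obtain ⟨D, hDo, hDcov, hDC, hDord⟩ := hdim.exists_closure_subset_ncard_le hCo hCcov
  refine ⟨fun i => B i ∪ D (some i), fun i => (hBo i).union (hDo _),
    fun i => (hFB i).trans subset_union_left,
    fun i => closure_union.trans_subset (union_subset (hBU i) (hDC (some i))), ?_⟩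
  refine eq_empty_of_forall_notMem fun x hx => ?_
  have hxV : ∀ i, x ∈ closure (B i ∪ D (some i)) \ (B i ∪ D (some i)) := fun i => by
    simpa only [((hBo i).union (hDo _)).frontier_eq] using mem_iInter.1 hx i
  obtain ⟨k, hxk⟩ := mem_iUnion.1 (hDcov ▸ mem_univ x)
  obtain rfl : k = none := by
    rcases k with _ | i
    · rfl
    · exact absurd (Or.inr hxk) (hxV i).2
  have hxB : ∀ i, x ∉ closure (B i) := fun i => mem_iInter.1 (hDC none (subset_closure hxk)) i
  have hall : {k | x ∈ closure (D k)} = univ := by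
    refine eq_univ_of_forall ?_
    rintro (_ | i)
    · exact subset_closure hxk
    · exact (closure_union.subset (hxV i).1).resolve_left (hxB i)
  have := hDord x
  rw [hall, ncard_univ, Nat.card_eq_fintype_card, Fintype.card_option, Fintype.card_fin] at this
  omega

end CovDimLE

theorem stmt_1 (n : ℕ) (X : Type) [TopologicalSpace X] [NormalSpace X]
    (hdim : CovDimLE X n)
    (U : Fin (n + 1) → Set X) (hU : ∀ i, IsOpen (U i))
    (F : Fin (n + 1) → Set X) (hF : ∀ i, IsClosed (F i))
    (hFU : ∀ i, F i ⊆ U i) :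
    ∃ V W : Fin (n + 1) → Set X,
      (∀ i, IsOpen (V i)) ∧ (∀ i, IsOpen (W i)) ∧
      (∀ i, F i ⊆ V i) ∧ (∀ i, closure (V i) ⊆ W i) ∧ (∀ i, W i ⊆ U i) ∧
      ⋂ i, (closure (W i) \ V i) = ∅ := by
  obtain ⟨V, hVo, hFV, hVU, hVfr⟩ := hdim.exists_iInter_frontier_eq_empty hU hF hFU
  obtain ⟨P, hPo, hVP, hPe⟩ :=
    exists_isOpen_superset_iInter_eq_empty (fun i => isClosed_frontier) hVfr
  have hVPU : ∀ i, closure (V i) ⊆ (V i ∪ P i) ∩ U i := fun i x hx =>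
    ⟨(em (x ∈ V i)).imp_right fun hxV => hVP i ((hVo i).frontier_eq ▸ ⟨hx, hxV⟩), hVU i hx⟩
  choose W hWo hVW hWVP using fun i =>
    normal_exists_closure_subset isClosed_closure (((hVo i).union (hPo i)).inter (hU i)) (hVPU i)
  refine ⟨V, W, hVo, hWo, hFV, hVW, fun i => subset_closure.trans fun x hx => (hWVP i hx).2, ?_⟩
  refine subset_empty_iff.1 (hPe ▸ iInter_mono fun i x hx => ?_)
  exact ((hWVP i hx.1).1).resolve_left hx.2
end

section
/- Let X be a compact Hausdorff space of covering dimension at most n. For any continuous map f : X → ℝ^{n+1} and any ε > 0, there exists a continuous g : X → ℝ^{n+1} with ‖f(x) − g(x)‖ < ε and g(x) ≠ 0 for all x ∈ X. -/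
open Finset Module

section GeneralPosition

variable {E : Type*} [NormedAddCommGroup E] [NormedSpace ℝ E]

theorem Submodule.dense_compl_of_ne_top_s2 {p : Submodule ℝ E} (hp : p ≠ ⊤) :
    Dense (p : Set E)ᶜ := by
  rw [← interior_eq_empty_iff_dense_compl]
  by_contra h
  exact hp (p.eq_top_of_nonempty_interior' (Set.nonempty_iff_ne_empty.2 h))

variable [FiniteDimensional ℝ E]

theorem exists_dist_lt_forall_notMem_of_ne_top {S : Set (Submodule ℝ E)} (hS : S.Finite)
    (hne : ∀ p ∈ S, p ≠ ⊤) (x : E) {δ : ℝ} (hδ : 0 < δ) :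
    ∃ y, dist y x < δ ∧ ∀ p ∈ S, y ∉ p := by
  have hdense : Dense (⋂ p ∈ S, (p : Set E)ᶜ) :=
    dense_biInter_of_isOpen (fun p _ => p.closed_of_finiteDimensional.isOpen_compl)
      hS.countable fun p hp => Submodule.dense_compl_of_ne_top_s2 (hne p hp)
  obtain ⟨y, hy, hxy⟩ := hdense.exists_dist_lt x hδ
  exact ⟨y, dist_comm x y ▸ hxy, by simpa using hy⟩

theorem exists_dist_lt_linearIndepOn_of_card_le_finrank {ι : Type*} (b : ι → E) {δ : ℝ}
    (hδ : 0 < δ) (s : Finset ι) :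
    ∃ c : ι → E, (∀ i, dist (c i) (b i) < δ) ∧
      ∀ t ⊆ s, #t ≤ finrank ℝ E → LinearIndepOn ℝ c (t : Set ι) := by
  classical
  induction s using Finset.induction_on with
  | empty =>
    refine ⟨b, fun i => by simpa using hδ, fun t ht _ => ?_⟩
    rw [Finset.subset_empty.1 ht, coe_empty]
    exact linearIndepOn_empty ℝ b
  | @insert a s ha ih =>
    obtain ⟨c, hcb, hc⟩ := ih
    -- the new vertex avoids the span of every set of fewer than `finrank ℝ E` old vertices
    obtain ⟨p, hpb, hp⟩ := exists_dist_lt_forall_notMem_of_ne_top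
      (S := (fun t : Finset ι => Submodule.span ℝ (c '' t)) '' {t | t ⊆ s ∧ #t < finrank ℝ E})
      ((s.powerset.finite_toSet.subset fun t ht => mem_powerset.2 ht.1).image _)
      (by
        rintro _ ⟨t, ⟨-, ht⟩, rfl⟩ (htop : Submodule.span ℝ _ = ⊤)
        have := finrank_span_finset_le_card (R := ℝ) (t.image c)
        rw [coe_image, Set.finrank, htop, finrank_top] at this
        exact (this.trans card_image_le).not_gt ht)
      (b a) hδ
    have heq : ∀ t ⊆ s, Set.EqOn (Function.update c a p) c t := fun t ht i hi =>
      Function.update_of_ne (ne_of_mem_of_not_mem (ht hi) ha) _ _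
    refine ⟨Function.update c a p, fun i => ?_, fun t ht hcard => ?_⟩
    · rcases eq_or_ne i a with rfl | hi
      · simpa using hpb
      · simpa [hi] using hcb i
    by_cases hat : a ∈ t
    · have hts : t.erase a ⊆ s := fun i hi =>
        (mem_insert.1 (ht (mem_of_mem_erase hi))).resolve_left (ne_of_mem_erase hi)
      have hlt : #(t.erase a) < finrank ℝ E := (card_erase_lt_of_mem hat).trans_le hcard
      rw [← insert_erase hat, coe_insert, linearIndepOn_insert (by simp),
        (heq _ hts).image_eq, Function.update_self]
      exact ⟨(hc _ hts hlt.le).congr (heq _ hts).symm, hp _ ⟨t.erase a, ⟨hts, hlt⟩, rfl⟩⟩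
    · have hts : t ⊆ s := fun i hi =>
        (mem_insert.1 (ht hi)).resolve_left (ne_of_mem_of_not_mem hi hat)
      exact (hc t hts hcard).congr (heq t hts).symm

end GeneralPosition

theorem CovDimLE.exists_finite_refinement {X : Type} [TopologicalSpace X] [CompactSpace X]
    {n : ℕ} (hdim : CovDimLE X n) {κ : Type*} (u : κ → Set X) (hu : ∀ k, IsOpen (u k))
    (hcov : ⋃ k, u k = Set.univ) :
    ∃ (ι : Type) (_ : Finite ι) (U : ι → Set X), (∀ i, IsOpen (U i)) ∧ ⋃ i, U i = Set.univ ∧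
      (∀ i, ∃ k, U i ⊆ u k) ∧ ∀ x, {i | x ∈ U i}.ncard ≤ n + 1 := by
  obtain ⟨𝒱, hopen, hcov𝒱, href, hmult⟩ :=
    hdim (Set.range u) (Set.forall_mem_range.2 hu) (Set.sUnion_range u ▸ hcov)
  obtain ⟨𝒲, hsub, hfin, hcov𝒲⟩ := isCompact_univ.elim_finite_subcover_image (c := id)
    (fun V hV => hopen V hV) (by simp [← Set.sUnion_eq_biUnion, hcov𝒱])
  refine ⟨𝒲, hfin.to_subtype, Subtype.val, fun V => hopen V (hsub V.2),
    Set.univ_subset_iff.1 (by simpa [Set.iUnion_subtype] using hcov𝒲), fun V => ?_, fun x => ?_⟩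
  · obtain ⟨_, ⟨k, rfl⟩, hk⟩ := href V (hsub V.2)
    exact ⟨k, hk⟩
  · rw [← Set.ncard_image_of_injective _ Subtype.val_injective]
    refine (Set.ncard_le_ncard ?_ (hmult x).1).trans (hmult x).2
    rintro _ ⟨V, hx, rfl⟩
    exact ⟨hsub V.2, hx⟩

namespace PartitionOfUnity

variable {ι X : Type*} [TopologicalSpace X] {s : Set X}

theorem IsSubordinate.card_finsupport_le [Finite ι] {ρ : PartitionOfUnity ι X s}
    {U : ι → Set X} (hρ : ρ.IsSubordinate U) (x : X) : #(ρ.finsupport x) ≤ {i | x ∈ U i}.ncard := by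
  rw [← Set.ncard_coe_finset]
  exact Set.ncard_le_ncard fun i hi => hρ i (subset_tsupport _ ((ρ.mem_finsupport x).1 hi))

theorem finsum_smul_ne_zero {E : Type*} [AddCommGroup E] [Module ℝ E]
    (ρ : PartitionOfUnity ι X s) {x : X} (hx : x ∈ s) {c : ι → E}
    (hc : LinearIndepOn ℝ c (ρ.finsupport x : Set ι)) :
    ∑ᶠ i, ρ i x • c i ≠ 0 := by
  intro h
  rw [← ρ.sum_finsupport_smul_eq_finsum fun i _ => c i] at h
  obtain ⟨i, hi⟩ := ρ.exists_pos hx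
  exact hi.ne' (linearIndepOn_finset_iff.1 hc (ρ · x) h i ((ρ.mem_finsupport x).2 hi.ne'))

end PartitionOfUnity

theorem stmt_2 (n : ℕ) (X : Type) [TopologicalSpace X] [CompactSpace X] [T2Space X]
    (hdim : CovDimLE X n)
    (f : X → EuclideanSpace ℝ (Fin (n + 1))) (hf : Continuous f)
    (ε : ℝ) (hε : 0 < ε) :
    ∃ g : X → EuclideanSpace ℝ (Fin (n + 1)), Continuous g ∧
      ∀ x, ‖f x - g x‖ < ε ∧ g x ≠ 0 := by
  obtain ⟨ι, _, U, hUo, hUcov, hUref, hmult⟩ := hdim.exists_finite_refinement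
    (fun y => f ⁻¹' Metric.ball (f y) (ε / 2)) (fun y => Metric.isOpen_ball.preimage hf)
    (Set.eq_univ_of_forall fun x => Set.mem_iUnion.2 ⟨x, Metric.mem_ball_self (half_pos hε)⟩)
  choose y hy using hUref
  obtain ⟨ρ, hρ⟩ := PartitionOfUnity.exists_isSubordinate isClosed_univ U hUo hUcov.ge
  have := Fintype.ofFinite ι
  obtain ⟨c, hcy, hc⟩ :=
    exists_dist_lt_linearIndepOn_of_card_le_finrank (fun i => f (y i)) (half_pos hε) univ
  refine ⟨fun x => ∑ᶠ i, ρ i x • c i, ρ.continuous_finsum_smul fun i _ _ => continuousAt_const,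
    fun x => ⟨?_, ?_⟩⟩
  · rw [← dist_eq_norm, dist_comm, ← Metric.mem_ball]
    refine ρ.finsum_smul_mem_convex (g := fun i _ => c i) (Set.mem_univ x) (fun i hi => ?_)
      (convex_ball _ _)
    have hxy : dist (f x) (f (y i)) < ε / 2 := hy i (hρ i (subset_tsupport _ hi))
    calc dist (c i) (f x) ≤ dist (c i) (f (y i)) + dist (f (y i)) (f x) := dist_triangle _ _ _
      _ < ε / 2 + ε / 2 := add_lt_add (hcy i) (dist_comm (f x) _ ▸ hxy)
      _ = ε := add_halves ε
  · refine ρ.finsum_smul_ne_zero (Set.mem_univ x) (hc _ (subset_univ _) ?_)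
    rw [finrank_euclideanSpace_fin]
    exact (hρ.card_finsupport_le x).trans (hmult x)
end

section
/- Let X be a normal space of covering dimension at most n, and let y ∈ ℝ^{n+1}. Then for every continuous f : X → ℝ^{n+1} and continuous ε : X → ℝ_{>0}, there exists continuous g : X → ℝ^{n+1} with ‖f(x) − g(x)‖ < ε(x) and g(x) ≠ y for all x ∈ X. -/
/-!
Cover `X` by countably many open sets `D k` on which `f` stays `ε`-close to every point of a
small ball `B k`. Dimension `≤ n` refines this to an open cover of order `≤ n + 1`, which in a
normal space can be made locally finite and so carries a subordinate partition of unity `ρ`.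
Now pick `c k ∈ B k` inductively so that `y` lies in no affine span of `≤ n + 1` of them: each
new choice has to avoid finitely many proper affine subspaces, a meagre set. Then
`g x = ∑ ρ k x • c k` is a convex combination of at most `n + 1` of the `c k`, all within
`ε x` of `f x`, and hence lies in the ball around `f x` but not at `y`.
-/

open Set Module

theorem affineSpan_ne_top_of_card_le_finrank {k V P : Type*} [DivisionRing k] [AddCommGroup V]
    [Module k V] [AddTorsor V P] [FiniteDimensional k V] (S : Finset P)
    (hS : S.card ≤ finrank k V) : affineSpan k (S : Set P) ≠ ⊤ := by
  classical
  intro htop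
  rcases S.eq_empty_or_nonempty with rfl | hne
  · simp at htop
  obtain ⟨m, hm⟩ := Nat.exists_eq_add_one_of_ne_zero hne.card_pos.ne'
  have hle := finrank_vectorSpan_image_finset_le k id S hm
  rw [Finset.image_id, ← direction_affineSpan, htop, AffineSubspace.direction_top,
    finrank_top] at hle
  omega

theorem mem_affineSpan_insert_exchange {k V : Type*} [Field k] [AddCommGroup V] [Module k V]
    {s : Set V} {p q : V} (hp : p ∈ affineSpan k (insert q s)) (hps : p ∉ affineSpan k s) :
    q ∈ affineSpan k (insert p s) := by
  rcases s.eq_empty_or_nonempty with rfl | ⟨b, hb⟩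
  · rw [insert_empty_eq, AffineSubspace.mem_affineSpan_singleton] at hp
    exact hp ▸ mem_affineSpan k (mem_insert _ _)
  have hb' : b ∈ affineSpan k s := mem_affineSpan k hb
  rw [← affineSpan_insert_affineSpan, AffineSubspace.mem_affineSpan_insert_iff hb'] at hp ⊢
  obtain ⟨r, a, ha, rfl⟩ := hp
  have hr : r ≠ 0 := by
    rintro rfl
    apply hps
    simpa using ha
  refine ⟨r⁻¹, r⁻¹ • (b -ᵥ a) +ᵥ b, AffineSubspace.smul_vsub_vadd_mem _ r⁻¹ hb' ha hb', ?_⟩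
  simp only [vsub_eq_sub, vadd_eq_add]
  match_scalars <;> field_simp <;> ring

theorem AffineSubspace.isNowhereDense {E : Type*} [NormedAddCommGroup E] [NormedSpace ℝ E]
    [FiniteDimensional ℝ E] {A : AffineSubspace ℝ E} (hA : A ≠ ⊤) : IsNowhereDense (A : Set E) := by
  refine A.closed_of_finiteDimensional.isNowhereDense_iff.2 ?_
  by_contra h
  refine hA (top_unique ?_)
  rw [← isOpen_interior.affineSpan_eq_top (nonempty_iff_ne_empty.2 h)]
  exact (affineSpan_mono ℝ interior_subset).trans (AffineSubspace.affineSpan_coe A).le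

theorem exists_seq_mem_forall_image_range {α : Type*} [DecidableEq α] (B : ℕ → Set α)
    (Q : Finset α → Prop) (h₀ : Q ∅) (h : ∀ k P, Q P → ∃ c ∈ B k, Q (insert c P)) :
    ∃ c : ℕ → α, (∀ k, c k ∈ B k) ∧ ∀ k, Q ((Finset.range k).image c) := by
  choose next hnextB hnextQ using h
  let F : ℕ → {P // Q P} := fun k =>
    Nat.rec ⟨∅, h₀⟩ (fun k P => ⟨insert (next k P.1 P.2) P.1, hnextQ k P.1 P.2⟩) k
  let c : ℕ → α := fun k => next k (F k).1 (F k).2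
  have hF : ∀ k, ((F k).1 : Finset α) = (Finset.range k).image c := by
    intro k
    induction k with
    | zero => rfl
    | succ k ih => rw [Finset.range_add_one, Finset.image_insert, ← ih]
  exact ⟨c, fun k => hnextB k _ _, fun k => hF k ▸ (F k).2⟩

section GeneralPosition

variable {E : Type*} [NormedAddCommGroup E] [NormedSpace ℝ E] [FiniteDimensional ℝ E]

theorem exists_mem_forall_notMem_affineSpan_insert [DecidableEq E] (y : E) {B : Set E}
    (hB : IsOpen B) (hBne : B.Nonempty) {P : Finset E}
    (hP : ∀ S ⊆ P, S.card ≤ finrank ℝ E → y ∉ affineSpan ℝ (S : Set E)) :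
    ∃ c ∈ B, ∀ S ⊆ insert c P, S.card ≤ finrank ℝ E → y ∉ affineSpan ℝ (S : Set E) := by
  set small := {S ∈ P.powerset | S.card < finrank ℝ E}
  have hmeagre : IsMeagre (⋃ S ∈ small, (affineSpan ℝ (insert y (S : Set E)) : Set E)) := by
    refine isMeagre_biUnion small.countable_toSet fun S hS => ?_
    refine (AffineSubspace.isNowhereDense ?_).isMeagre
    rw [← Finset.coe_insert]
    refine affineSpan_ne_top_of_card_le_finrank _ ((Finset.card_insert_le _ _).trans ?_)
    exact (Finset.mem_filter.1 hS).2
  obtain ⟨c, hcB, hc⟩ := nonempty_of_not_subset fun hsub =>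
    not_isMeagre_of_isOpen hB hBne (hmeagre.mono hsub)
  refine ⟨c, hcB, fun S hSP hS hyS => ?_⟩
  by_cases hcS : c ∈ S
  · have hS'P : S.erase c ⊆ P := fun a ha =>
      (Finset.mem_insert.1 (hSP (Finset.mem_of_mem_erase ha))).resolve_left
        (Finset.ne_of_mem_erase ha)
    have hS' : (S.erase c).card < finrank ℝ E := by
      rw [Finset.card_erase_of_mem hcS]
      have := Finset.card_pos.2 ⟨c, hcS⟩
      omega
    -- exchange: `y ∈ affineSpan (insert c S')` and `y ∉ affineSpan S'` put `c` into the meagre set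
    rw [← Finset.insert_erase hcS, Finset.coe_insert] at hyS
    refine hc (mem_biUnion (Finset.mem_filter.2 ⟨Finset.mem_powerset.2 hS'P, hS'⟩) ?_)
    exact mem_affineSpan_insert_exchange hyS (hP _ hS'P hS'.le)
  · refine hP S (fun a ha => ?_) hS hyS
    exact (Finset.mem_insert.1 (hSP ha)).resolve_left (ne_of_mem_of_not_mem ha hcS)

theorem exists_seq_mem_forall_notMem_affineSpan (y : E) {B : ℕ → Set E}
    (hB : ∀ k, IsOpen (B k)) (hBne : ∀ k, (B k).Nonempty) :
    ∃ c : ℕ → E, (∀ k, c k ∈ B k) ∧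
      ∀ s : Finset ℕ, s.card ≤ finrank ℝ E → y ∉ affineSpan ℝ (c '' s) := by
  classical
  obtain ⟨c, hcB, hc⟩ := exists_seq_mem_forall_image_range B
    (fun P => ∀ S ⊆ P, S.card ≤ finrank ℝ E → y ∉ affineSpan ℝ (S : Set E))
    (fun S hS _ => by simpa [Finset.subset_empty.1 hS] using AffineSubspace.notMem_bot ℝ E y)
    (fun k _ hP => exists_mem_forall_notMem_affineSpan_insert y (hB k) (hBne k) hP)
  refine ⟨c, hcB, fun s hs => ?_⟩
  obtain ⟨N, hN⟩ := s.exists_nat_subset_range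
  rw [← Finset.coe_image]
  exact hc N _ (Finset.image_subset_image hN) (Finset.card_image_le.trans hs)

end GeneralPosition

theorem exists_nat_open_cover_forall_dist_lt {X E : Type*} [TopologicalSpace X]
    [PseudoMetricSpace E] [TopologicalSpace.SeparableSpace E] [Nonempty E] {f : X → E}
    (hf : Continuous f) {ε : X → ℝ} (hε : Continuous ε) (hεpos : ∀ x, 0 < ε x) :
    ∃ (D : ℕ → Set X) (B : ℕ → Set E), (∀ k, IsOpen (D k)) ∧ ⋃ k, D k = univ ∧
      (∀ k, IsOpen (B k)) ∧ (∀ k, (B k).Nonempty) ∧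
      ∀ k, ∀ x ∈ D k, ∀ c ∈ B k, dist (f x) c < ε x := by
  obtain ⟨u, hu⟩ := TopologicalSpace.exists_dense_seq E
  obtain ⟨e, he⟩ := exists_surjective_nat (ℕ × ℕ)
  let r : ℕ → ℝ := fun m => 1 / (m + 1)
  have hr : ∀ m, 0 < r m := fun m => Nat.one_div_pos_of_nat
  refine ⟨fun k => {x | dist (f x) (u (e k).1) < r (e k).2} ∩ {x | 2 * r (e k).2 < ε x},
    fun k => Metric.ball (u (e k).1) (r (e k).2), fun k => ?_, ?_,
    fun k => Metric.isOpen_ball, fun k => Metric.nonempty_ball.2 (hr _), ?_⟩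
  · exact (isOpen_lt (by fun_prop) continuous_const).inter (isOpen_lt continuous_const hε)
  · refine eq_univ_of_forall fun x => mem_iUnion.2 ?_
    obtain ⟨m, hm⟩ := exists_nat_one_div_lt (half_pos (hεpos x))
    obtain ⟨j, hj⟩ := hu.exists_dist_lt (f x) (hr m)
    obtain ⟨k, hk⟩ := he (j, m)
    refine ⟨k, ?_, ?_⟩ <;> simp only [mem_ofPred_eq, hk]
    · exact hj
    · change 2 * (1 / ((m : ℝ) + 1)) < ε x
      linarith
  · rintro k x ⟨hxu, hxε⟩ c hc
    calc dist (f x) c ≤ dist (f x) (u (e k).1) + dist c (u (e k).1) := dist_triangle_right _ _ _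
      _ < 2 * r (e k).2 := by linarith [Metric.mem_ball.1 hc, hxu.out]
      _ < ε x := hxε

theorem CovDimLE.exists_subset_iUnion_eq {X : Type} [TopologicalSpace X] {n : ℕ}
    (hX : CovDimLE X n) {ι : Type*} {D : ι → Set X} (hDo : ∀ i, IsOpen (D i))
    (hD : ⋃ i, D i = univ) :
    ∃ W : ι → Set X, (∀ i, IsOpen (W i)) ∧ (∀ i, W i ⊆ D i) ∧ ⋃ i, W i = univ ∧
      ∀ x, {i | x ∈ W i}.Finite ∧ {i | x ∈ W i}.ncard ≤ n + 1 := by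
  obtain ⟨𝒱, h𝒱o, h𝒱, h𝒱D, h𝒱fin⟩ := hX (range D) (forall_mem_range.2 hDo) (sUnion_range D ▸ hD)
  rcases isEmpty_or_nonempty ι with hι | hι
  · exact ⟨D, hDo, fun _ => subset_rfl, hD, fun x => ⟨toFinite _, by simp [eq_empty_of_isEmpty]⟩⟩
  choose! j hj using fun V hV => exists_range_iff.1 (h𝒱D V hV)
  refine ⟨fun i => ⋃₀ {V ∈ 𝒱 | j V = i}, fun i => isOpen_sUnion fun V hV => h𝒱o V hV.1,
    fun i x ⟨V, ⟨hV, hVi⟩, hx⟩ => hVi ▸ hj V hV hx, ?_, fun x => ?_⟩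
  · refine eq_univ_of_forall fun x => ?_
    obtain ⟨V, hV, hx⟩ := h𝒱 ▸ mem_univ x
    exact mem_iUnion.2 ⟨j V, V, ⟨hV, rfl⟩, hx⟩
  have hx : {i | x ∈ ⋃₀ {V ∈ 𝒱 | j V = i}} = j '' {V ∈ 𝒱 | x ∈ V} := by
    ext i
    simp only [mem_ofPred_eq, mem_sUnion, mem_image]
    grind
  rw [hx]
  exact ⟨(h𝒱fin x).1.image j, (ncard_image_le (h𝒱fin x).1).trans (h𝒱fin x).2⟩

theorem exists_locallyFinite_subset_iUnion_eq {X : Type*} [TopologicalSpace X] [NormalSpace X]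
    {U : ℕ → Set X} (hUo : ∀ k, IsOpen (U k)) (hUfin : ∀ x, {k | x ∈ U k}.Finite)
    (hU : ⋃ k, U k = univ) :
    ∃ V : ℕ → Set X, (∀ k, IsOpen (V k)) ∧ (∀ k, V k ⊆ U k) ∧ ⋃ k, V k = univ ∧
      LocallyFinite V := by
  classical
  obtain ⟨S, hS, hSo, hSU⟩ := exists_iUnion_eq_closure_subset hUo hUfin hU
  refine ⟨fun k => U k \ ⋃ j < k, closure (S j),
    fun k => (hUo k).sdiff ((finite_lt_nat k).isClosed_biUnion fun _ _ => isClosed_closure),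
    fun k => sdiff_subset, ?_, fun x => ?_⟩
  · refine eq_univ_of_forall fun x => mem_iUnion.2 ?_
    have hex : ∃ k, x ∈ closure (S k) :=
      (mem_iUnion.1 (hS ▸ mem_univ x)).imp fun _ => (subset_closure ·)
    refine ⟨Nat.find hex, hSU _ (Nat.find_spec hex), ?_⟩
    simp only [mem_iUnion, not_exists]
    exact fun j hj => Nat.find_min hex hj
  -- the neighbourhood `S N` of `x` is disjoint from `V k` for every `k > N`
  obtain ⟨N, hN⟩ := mem_iUnion.1 (hS ▸ mem_univ x)
  refine ⟨S N, (hSo N).mem_nhds hN, (finite_le_nat N).subset ?_⟩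
  rintro k ⟨z, ⟨-, hz⟩, hzN⟩
  by_contra hk
  exact hz (mem_iUnion₂.2 ⟨N, not_le.1 hk, subset_closure hzN⟩)

theorem stmt_3 (n : ℕ) (X : Type) [TopologicalSpace X] [NormalSpace X]
    (hdim : CovDimLE X n) (y : EuclideanSpace ℝ (Fin (n + 1)))
    (f : X → EuclideanSpace ℝ (Fin (n + 1))) (hf : Continuous f)
    (ε : X → ℝ) (hε : Continuous ε) (hεpos : ∀ x, 0 < ε x) :
    ∃ g : X → EuclideanSpace ℝ (Fin (n + 1)), Continuous g ∧
      ∀ x, ‖f x - g x‖ < ε x ∧ g x ≠ y := by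
  obtain ⟨D, B, hDo, hD, hBo, hBne, hDB⟩ := exists_nat_open_cover_forall_dist_lt hf hε hεpos
  obtain ⟨W, hWo, hWD, hW, hWfin⟩ := hdim.exists_subset_iUnion_eq hDo hD
  obtain ⟨U, hUo, hUW, hU, hUlf⟩ :=
    exists_locallyFinite_subset_iUnion_eq hWo (fun x => (hWfin x).1) hW
  obtain ⟨ρ, hρU⟩ := PartitionOfUnity.exists_isSubordinate_of_locallyFinite isClosed_univ U hUo
    hUlf hU.ge
  obtain ⟨c, hcB, hc⟩ := exists_seq_mem_forall_notMem_affineSpan y hBo hBne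
  have hρW : ∀ x k, ρ k x ≠ 0 → x ∈ W k := fun x k hk => hUW k (hρU k (subset_tsupport _ hk))
  refine ⟨fun x => ∑ᶠ k, ρ k x • c k, hρU.continuous_finsum_smul hUo fun _ => continuousOn_const,
    fun x => ⟨?_, fun hy => ?_⟩⟩
  · have hball := ρ.finsum_smul_mem_convex (g := fun k _ => c k) (mem_univ x)
      (fun k hk => Metric.mem_ball'.2 (hDB k x (hWD k (hρW x k hk)) (c k) (hcB k)))
      (convex_ball (f x) (ε x))
    rwa [Metric.mem_ball', dist_eq_norm] at hball
  · let s := (hWfin x).1.toFinset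
    have hs : s.card ≤ finrank ℝ (EuclideanSpace ℝ (Fin (n + 1))) := by
      rw [finrank_euclideanSpace_fin, ← ncard_eq_toFinset_card _ (hWfin x).1]
      exact (hWfin x).2
    refine hc s hs (hy ▸ ρ.finsum_smul_mem_convex (g := fun k _ => c k) (mem_univ x)
      (fun k hk => mem_affineSpan ℝ ⟨k, by simpa [s] using hρW x k hk, rfl⟩)
      (AffineSubspace.convex _))
end

section
/- Let n < q be natural numbers, X a normal space of covering dimension at most n, f : X → ℝ^p continuous (p ≥ q), and let Z ⊆ ℝ^{p−q} × {0} ⊆ ℝ^p be any subset of the coordinate subspace consisting of vectors whose last q coordinates vanish. Then for any continuous ε : X → ℝ_{>0} there exists a continuous g : X → ℝ^p with ‖f(x) − g(x)‖ < ε(x) for all x, and g(x) not in the closure of Z for all x; in fact g(x) can be taken outside ℝ^{p−q} × {0} for all x. -/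
open Set Metric Module Submodule

theorem exists_seq_forall_image_range {α : Type*} [DecidableEq α]
    (R : ℕ → Finset α → α → Prop) (h : ∀ m s, ∃ x, R m s x) :
    ∃ v : ℕ → α, ∀ m, R m ((Finset.range m).image v) (v m) := by
  choose next hnext using h
  let prefixes : ℕ → Finset α := fun m => Nat.rec ∅ (fun m s => insert (next m s) s) m
  have hprefixes : ∀ m, prefixes m = (Finset.range m).image fun k => next k (prefixes k) := by
    intro m
    induction m with
    | zero => rfl
    | succ m ih => rw [Finset.range_add_one, Finset.image_insert, ← ih]
  exact ⟨fun m => next m (prefixes m), fun m => hprefixes m ▸ hnext m (prefixes m)⟩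

theorem exists_mem_ball_forall_notMem_of_ne_top {E : Type*} [NormedAddCommGroup E]
    [NormedSpace ℝ E] [FiniteDimensional ℝ E] {𝒮 : Set (Submodule ℝ E)} (h𝒮 : 𝒮.Finite)
    (hne : ∀ V ∈ 𝒮, V ≠ ⊤) (c : E) {r : ℝ} (hr : 0 < r) :
    ∃ x ∈ ball c r, ∀ V ∈ 𝒮, x ∉ V := by
  borelize E
  let μ : MeasureTheory.Measure E := MeasureTheory.Measure.addHaar
  have hnull : μ (⋃ V ∈ 𝒮, (V : Set E)) = 0 :=
    (MeasureTheory.measure_biUnion_null_iff h𝒮.countable).2 fun V hV =>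
      MeasureTheory.Measure.addHaar_submodule μ V (hne V hV)
  obtain ⟨x, hx, hxV⟩ := not_subset.1 fun h =>
    (measure_ball_pos μ c hr).ne' (MeasureTheory.measure_mono_null h hnull)
  exact ⟨x, hx, fun V hV hxV' => hxV (mem_biUnion hV hxV')⟩

theorem exists_seq_mem_ball_linearIndepOn {E F : Type*} [NormedAddCommGroup E]
    [NormedSpace ℝ E] [FiniteDimensional ℝ E] [AddCommGroup F] [Module ℝ F]
    [FiniteDimensional ℝ F] (π : E →ₗ[ℝ] F) (hπ : Function.Surjective π) (c : ℕ → E)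
    {r : ℕ → ℝ} (hr : ∀ k, 0 < r k) :
    ∃ v : ℕ → E, (∀ k, v k ∈ ball (c k) (r k)) ∧
      ∀ s : Finset ℕ, s.card ≤ finrank ℝ F → LinearIndepOn ℝ (π ∘ v) s := by
  classical
  have hcomap_ne_top : ∀ T : Finset E, T.card < finrank ℝ F → (span ℝ (π '' T)).comap π ≠ ⊤ := by
    intro T hT htop
    have hle := finrank_span_finset_le_card (R := ℝ) (T.image π)
    rw [Set.finrank, Finset.coe_image, ← map_comap_eq_of_surjective hπ (span ℝ (π '' T)), htop,
      Submodule.map_top, LinearMap.range_eq_top.2 hπ, finrank_top] at hle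
    exact (hle.trans Finset.card_image_le).not_gt hT
  obtain ⟨v, hv⟩ := exists_seq_forall_image_range (fun m (P : Finset E) x =>
      x ∈ ball (c m) (r m) ∧
        ∀ T ⊆ P, T.card < finrank ℝ F → π x ∉ span ℝ (π '' T)) fun m P => by
    obtain ⟨x, hx, hxV⟩ := exists_mem_ball_forall_notMem_of_ne_top
      (((P.powerset.filter fun T => T.card < finrank ℝ F).finite_toSet).image
        fun T : Finset E => (span ℝ (π '' T)).comap π)
      (by rintro _ ⟨T, hT, rfl⟩; exact hcomap_ne_top T (Finset.mem_filter.1 hT).2) (c m) (hr m)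
    exact ⟨x, hx, fun T hTP hT => hxV _ ⟨T, by simpa using ⟨hTP, hT⟩, rfl⟩⟩
  refine ⟨v, fun k => (hv k).1, fun s => ?_⟩
  induction s using Finset.induction_on_max with
  | empty => simp
  | insert a s hlt ih =>
    intro hcard
    have has : a ∉ s := fun h => lt_irrefl a (hlt a h)
    rw [Finset.card_insert_of_notMem has] at hcard
    rw [Finset.coe_insert, linearIndepOn_insert (by exact_mod_cast has)]
    refine ⟨ih (by omega), ?_⟩
    have := (hv a).2 (s.image v) (Finset.image_subset_image fun k hk =>
      Finset.mem_range.2 (hlt k hk)) (Finset.card_image_le.trans_lt (by omega))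
    rwa [Finset.coe_image, ← image_comp] at this

theorem zero_notMem_convexHull_image_of_linearIndepOn {ι V : Type*} [AddCommGroup V]
    [Module ℝ V] {w : ι → V} {s : Set ι} (hs : LinearIndepOn ℝ w s) :
    (0 : V) ∉ convexHull ℝ (w '' s) := by
  let ℓ : V →ₗ[ℝ] ℝ := (Basis.extend hs.id_image).constr ℝ fun _ => 1
  have hℓ : w '' s ⊆ ℓ ⁻¹' {1} := fun x hx => by
    have := (Basis.extend hs.id_image).constr_basis ℝ (fun _ => (1 : ℝ))
      ⟨x, hs.id_image.subset_extend _ hx⟩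
    simpa [Basis.coe_extend] using this
  intro h0
  simpa using convexHull_min hℓ ((convex_singleton 1).linear_preimage ℓ) h0

theorem CovDimLE.exists_refinement {X : Type} [TopologicalSpace X] {n : ℕ}
    (hdim : CovDimLE X n) {ι : Type*} {A : ι → Set X} (hA : ∀ i, IsOpen (A i))
    (hAX : ⋃ i, A i = univ) :
    ∃ W : ι → Set X, (∀ i, IsOpen (W i)) ∧ (∀ i, W i ⊆ A i) ∧ ⋃ i, W i = univ ∧
      ∀ x, {i | x ∈ W i}.Finite ∧ {i | x ∈ W i}.ncard ≤ n + 1 := by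
  rcases isEmpty_or_nonempty ι with hι | hι
  · exact ⟨A, hA, fun _ => subset_rfl, hAX, fun x => by simp [Set.eq_empty_of_isEmpty]⟩
  obtain ⟨𝒱, h𝒱open, h𝒱X, h𝒱A, h𝒱x⟩ :=
    hdim (range A) (forall_mem_range.2 hA) (by rwa [sUnion_range])
  have h𝒱A' : ∀ V ∈ 𝒱, ∃ i, V ⊆ A i := fun V hV => by
    obtain ⟨_, ⟨i, rfl⟩, hVA⟩ := h𝒱A V hV
    exact ⟨i, hVA⟩
  choose! κ hκ using h𝒱A'
  have hsub : ∀ x, {i | x ∈ ⋃₀ {V ∈ 𝒱 | κ V = i}} ⊆ κ '' {V ∈ 𝒱 | x ∈ V} := by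
    rintro x i ⟨V, ⟨hV, rfl⟩, hx⟩
    exact ⟨V, ⟨hV, hx⟩, rfl⟩
  refine ⟨fun i => ⋃₀ {V ∈ 𝒱 | κ V = i}, fun i => isOpen_sUnion fun V hV => h𝒱open V hV.1,
    ?_, ?_, fun x => ⟨((h𝒱x x).1.image κ).subset (hsub x), ?_⟩⟩
  · rintro i x ⟨V, ⟨hV, rfl⟩, hx⟩
    exact hκ V hV hx
  · refine eq_univ_of_forall fun x => ?_
    obtain ⟨V, hV, hx⟩ : x ∈ ⋃₀ 𝒱 := h𝒱X ▸ mem_univ x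
    exact mem_iUnion.2 ⟨κ V, V, ⟨hV, rfl⟩, hx⟩
  · calc _ ≤ (κ '' {V ∈ 𝒱 | x ∈ V}).ncard := ncard_le_ncard (hsub x) ((h𝒱x x).1.image κ)
      _ ≤ {V ∈ 𝒱 | x ∈ V}.ncard := ncard_image_le (h𝒱x x).1
      _ ≤ n + 1 := (h𝒱x x).2

theorem exists_continuous_subordinate_of_pointFinite {X ι : Type*} [TopologicalSpace X]
    [NormalSpace X] {W : ι → Set X} (hW : ∀ i, IsOpen (W i)) (hfin : ∀ x, {i | x ∈ W i}.Finite)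
    (hWX : ⋃ i, W i = univ) :
    ∃ φ : ι → C(X, ℝ), (∀ i x, φ i x ∈ Icc 0 1) ∧ (∀ i, ∀ x ∉ W i, φ i x = 0) ∧
      ∀ x, ∃ i, φ i x = 1 := by
  obtain ⟨V, hVX, -, hVW⟩ := exists_iUnion_eq_closure_subset hW hfin hWX
  have hφ : ∀ i, ∃ φ : C(X, ℝ), EqOn φ 0 (W i)ᶜ ∧ EqOn φ 1 (closure (V i)) ∧
      ∀ x, φ x ∈ Icc 0 1 := fun i =>
    exists_continuous_zero_one_of_isClosed (hW i).isClosed_compl isClosed_closure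
      (disjoint_compl_left_iff_subset.2 (hVW i))
  choose φ hφW hφV hφ01 using hφ
  refine ⟨φ, fun i => hφ01 i, fun i x hx => hφW i hx, fun x => ?_⟩
  obtain ⟨i, hi⟩ := mem_iUnion.1 (hVX ▸ mem_univ x)
  exact ⟨i, hφV i (subset_closure hi)⟩

theorem CovDimLE.exists_continuous_subordinate {X : Type} [TopologicalSpace X] [NormalSpace X]
    {n : ℕ} (hdim : CovDimLE X n) {ι : Type*} {A : ι → Set X} (hA : ∀ i, IsOpen (A i))
    (hAX : ⋃ i, A i = univ) :
    ∃ φ : ι → C(X, ℝ), (∀ i x, φ i x ∈ Icc 0 1) ∧ (∀ i x, φ i x ≠ 0 → x ∈ A i) ∧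
      (∀ x, {i | φ i x ≠ 0}.Finite ∧ {i | φ i x ≠ 0}.ncard ≤ n + 1) ∧ ∀ x, ∃ i, φ i x ≠ 0 := by
  obtain ⟨W, hW, hWA, hWX, hWx⟩ := hdim.exists_refinement hA hAX
  obtain ⟨φ, hφ01, hφW, hφ1⟩ :=
    exists_continuous_subordinate_of_pointFinite hW (fun x => (hWx x).1) hWX
  have hsub : ∀ x, {i | φ i x ≠ 0} ⊆ {i | x ∈ W i} := fun x i hi =>
    by_contra fun h => hi (hφW i x h)
  refine ⟨φ, hφ01, fun i x hi => hWA i (hsub x hi), fun x => ⟨(hWx x).1.subset (hsub x),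
    (ncard_le_ncard (hsub x) (hWx x).1).trans (hWx x).2⟩, fun x => ?_⟩
  obtain ⟨i, hi⟩ := hφ1 x
  exact ⟨i, by simp [hi]⟩

theorem exists_continuous_forall_mem_convexHull {X E : Type*} [TopologicalSpace X]
    [NormedAddCommGroup E] [NormedSpace ℝ E] [CompleteSpace E] (φ : ℕ → C(X, ℝ))
    (hφ : ∀ k x, φ k x ∈ Icc 0 1) (hfin : ∀ x, {k | φ k x ≠ 0}.Finite)
    (hpos : ∀ x, ∃ k, φ k x ≠ 0) (v : ℕ → E) :
    ∃ g : C(X, E), ∀ x, g x ∈ convexHull ℝ (v '' {k | φ k x ≠ 0}) := by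
  -- the factor `(1 / 2) ^ k / (1 + ‖v k‖)` makes both series below converge uniformly
  set w : ℕ → X → ℝ := fun k x => (1 / 2) ^ k / (1 + ‖v k‖) * φ k x with hw
  have hw0 : ∀ k x, 0 ≤ w k x := fun k x => mul_nonneg (by positivity) (hφ k x).1
  have hw_le : ∀ k x, w k x * (1 + ‖v k‖) ≤ (1 / 2) ^ k := fun k x => by
    rw [hw, mul_right_comm, div_mul_cancel₀ _ (by positivity)]
    exact mul_le_of_le_one_right (by positivity) (hφ k x).2
  have hsum : Continuous fun x => ∑' k, w k x :=
    continuous_tsum (fun k => continuous_const.mul (φ k).continuous) summable_geometric_two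
      fun k x => by
        rw [Real.norm_of_nonneg (hw0 k x)]
        nlinarith [hw0 k x, hw_le k x, norm_nonneg (v k)]
  have hsmul : Continuous fun x => ∑' k, w k x • v k :=
    continuous_tsum (fun k => (continuous_const.mul (φ k).continuous).smul continuous_const)
      summable_geometric_two fun k x => by
        rw [norm_smul, Real.norm_of_nonneg (hw0 k x)]
        nlinarith [hw0 k x, hw_le k x, norm_nonneg (v k)]
  have hzero : ∀ x, ∀ k ∉ (hfin x).toFinset, w k x = 0 := fun x k hk => by
    simp_all
  have hpos' : ∀ x, 0 < ∑ k ∈ (hfin x).toFinset, w k x := fun x => by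
    obtain ⟨k, hk⟩ := hpos x
    have hk' : k ∈ (hfin x).toFinset := by simpa using hk
    exact Finset.sum_pos' (fun k _ => hw0 k x)
      ⟨k, hk', mul_pos (by positivity) (lt_of_le_of_ne (hφ k x).1 (Ne.symm hk))⟩
  refine ⟨⟨fun x => (∑' k, w k x)⁻¹ • ∑' k, w k x • v k,
    (hsum.inv₀ fun x => ?_).smul hsmul⟩, fun x => ?_⟩
  · rw [tsum_eq_sum (hzero x)]
    exact (hpos' x).ne'
  · have := (hfin x).toFinset.centerMass_mem_convexHull (fun k _ => hw0 k x) (hpos' x)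
      (z := v) (s := v '' {k | φ k x ≠ 0}) fun k hk => mem_image_of_mem v (by simpa using hk)
    convert this using 1
    rw [Finset.centerMass, ContinuousMap.coe_mk, tsum_eq_sum (hzero x),
      tsum_eq_sum fun k hk => by rw [hzero x k hk, zero_smul]]

theorem exists_seq_ball_forall_exists_radius_lt {E : Type*} [PseudoMetricSpace E]
    [TopologicalSpace.SeparableSpace E] [Nonempty E] :
    ∃ (c : ℕ → E) (r : ℕ → ℝ), (∀ k, 0 < r k) ∧
      ∀ y, ∀ δ > 0, ∃ k, y ∈ ball (c k) (r k) ∧ r k < δ := by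
  refine ⟨fun k => TopologicalSpace.denseSeq E k.unpair.1, fun k => (1 / 2) ^ k.unpair.2,
    fun k => by positivity, fun y δ hδ => ?_⟩
  obtain ⟨m, hm⟩ := exists_pow_lt_of_lt_one hδ (by norm_num : (1 / 2 : ℝ) < 1)
  obtain ⟨j, hj⟩ := denseRange_iff.1 (TopologicalSpace.denseRange_denseSeq E) y _
    (by positivity : (0 : ℝ) < (1 / 2) ^ m)
  exact ⟨Nat.pair j m, by simpa [Nat.unpair_pair] using hj, by simpa [Nat.unpair_pair] using hm⟩

noncomputable def lastCoords {p q : ℕ} (h : q ≤ p) :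
    EuclideanSpace ℝ (Fin p) →ₗ[ℝ] EuclideanSpace ℝ (Fin q) :=
  (WithLp.linearEquiv 2 ℝ (Fin q → ℝ)).symm.toLinearMap ∘ₗ
    LinearMap.funLeft ℝ ℝ (fun j : Fin q => (⟨p - q + j, by omega⟩ : Fin p)) ∘ₗ
      (WithLp.linearEquiv 2 ℝ (Fin p → ℝ)).toLinearMap

theorem lastCoords_surjective {p q : ℕ} (h : q ≤ p) : Function.Surjective (lastCoords h) := by
  have hinj : Function.Injective fun j : Fin q => (⟨p - q + j, by omega⟩ : Fin p) :=
    fun i j hij => Fin.ext <| by simpa using hij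
  exact (WithLp.linearEquiv 2 ℝ _).symm.surjective.comp
    ((LinearMap.funLeft_surjective_of_injective ℝ ℝ _ hinj).comp
      (WithLp.linearEquiv 2 ℝ _).surjective)

theorem lastCoords_eq_zero_iff {p q : ℕ} (h : q ≤ p) (v : EuclideanSpace ℝ (Fin p)) :
    lastCoords h v = 0 ↔ ∀ i : Fin p, p - q ≤ (i : ℕ) → v i = 0 := by
  refine ⟨fun hv i hi => ?_, fun hv => ?_⟩
  · have := congrArg (· ⟨i - (p - q), by omega⟩) hv
    simpa [lastCoords, LinearMap.funLeft, Nat.add_sub_cancel' hi] using this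
  · ext j
    exact hv _ (Nat.le_add_right _ _)

theorem stmt_4 (n q p : ℕ) (hnq : n < q) (hqp : q ≤ p)
    (X : Type) [TopologicalSpace X] [NormalSpace X] (hdim : CovDimLE X n)
    (S : Set (EuclideanSpace ℝ (Fin p)))
    (hS : S = {v : EuclideanSpace ℝ (Fin p) | ∀ i : Fin p, p - q ≤ (i : ℕ) → v i = 0})
    (Z : Set (EuclideanSpace ℝ (Fin p))) (hZS : Z ⊆ S)
    (f : X → EuclideanSpace ℝ (Fin p)) (hf : Continuous f)
    (ε : X → ℝ) (hε : Continuous ε) (hεpos : ∀ x, 0 < ε x) :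
    ∃ g : X → EuclideanSpace ℝ (Fin p), Continuous g ∧
      ∀ x, ‖f x - g x‖ < ε x ∧ g x ∉ closure Z ∧ g x ∉ S := by
  obtain ⟨c, r, hr, hcr⟩ :=
    exists_seq_ball_forall_exists_radius_lt (E := EuclideanSpace ℝ (Fin p))
  obtain ⟨v, hvc, hvπ⟩ :=
    exists_seq_mem_ball_linearIndepOn (lastCoords hqp) (lastCoords_surjective hqp) c hr
  let A : ℕ → Set X := fun k => f ⁻¹' ball (c k) (r k) ∩ {x | 2 * r k < ε x}
  have hAX : ⋃ k, A k = univ := eq_univ_of_forall fun x => by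
    obtain ⟨k, hk, hrk⟩ := hcr (f x) (ε x / 2) (half_pos (hεpos x))
    exact mem_iUnion.2 ⟨k, hk, show 2 * r k < ε x by linarith⟩
  obtain ⟨φ, hφ01, hφA, hφfin, hφpos⟩ := hdim.exists_continuous_subordinate
    (fun k => (isOpen_ball.preimage hf).inter (isOpen_lt continuous_const hε)) hAX
  obtain ⟨g, hg⟩ := exists_continuous_forall_mem_convexHull φ hφ01 (fun x => (hφfin x).1) hφpos v
  have hgf : ∀ x, g x ∈ ball (f x) (ε x) := fun x => by
    refine convexHull_min ?_ (convex_ball _ _) (hg x)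
    rintro _ ⟨k, hk, rfl⟩
    obtain ⟨hfk, hrk : 2 * r k < ε x⟩ := hφA k x hk
    have hvk := mem_ball.1 (hvc k)
    have hfk := mem_ball.1 hfk
    exact mem_ball.2 (by linarith [dist_triangle_right (v k) (f x) (c k)])
  have hgπ : ∀ x, lastCoords hqp (g x) ≠ 0 := fun x hx => by
    have hK := (hφfin x).1
    have hind := hvπ hK.toFinset (by
      rw [← ncard_eq_toFinset_card _ hK, finrank_euclideanSpace_fin]; linarith [(hφfin x).2])
    rw [hK.coe_toFinset] at hind
    refine zero_notMem_convexHull_image_of_linearIndepOn hind (hx ▸ ?_)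
    rw [image_comp, ← LinearMap.image_convexHull]
    exact mem_image_of_mem _ (hg x)
  obtain rfl : S = lastCoords hqp ⁻¹' {0} := hS.trans (by ext; simp [lastCoords_eq_zero_iff])
  have hSclosed := (isClosed_singleton (x := 0)).preimage
    (lastCoords hqp).continuous_of_finiteDimensional
  exact ⟨g, g.continuous, fun x => ⟨by simpa [dist_eq_norm] using mem_ball'.1 (hgf x),
    fun hx => hgπ x (closure_minimal hZS hSclosed hx), hgπ x⟩⟩
end

section
/- Let X be a normal space, Y a metric space, and Z₁, Z₂ closed subsets of Y, each X-avoidable. Then Z₁ ∪ Z₂ is X-avoidable. -/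
/-
First perturb `f` by less than `ε / 2` to a map `g₁` missing `Z₁`. Since `Z₁` is closed, the
distance from `g₁ x` to `Z₁` is a continuous positive function of `x`, so any perturbation of
`g₁` by less than it still misses `Z₁`. Perturbing `g₁` once more, by less than this margin and
less than `ε / 2`, to a map missing `Z₂` gives a map missing `Z₁ ∪ Z₂` within `ε` of `f`.
-/

/-- `Z` is `X`-avoidable: every continuous map `X → Y` admits, within any continuous
positive error function, a continuous perturbation whose image misses `Z`. -/
def Avoidable (X : Type) [TopologicalSpace X] {Y : Type} [MetricSpace Y] (Z : Set Y) : Prop :=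
  ∀ f : X → Y, Continuous f → ∀ ε : X → ℝ, Continuous ε → (∀ x, 0 < ε x) →
    ∃ g : X → Y, Continuous g ∧ ∀ x, g x ∉ Z ∧ dist (f x) (g x) < ε x

theorem IsClosed.exists_continuous_pos_margin {X Y : Type*} [TopologicalSpace X]
    [PseudoMetricSpace Y] {Z : Set Y} (hZ : IsClosed Z) {g : X → Y} (hg : Continuous g)
    (hgZ : ∀ x, g x ∉ Z) :
    ∃ δ : X → ℝ, Continuous δ ∧ (∀ x, 0 < δ x) ∧ ∀ x y, dist (g x) y < δ x → y ∉ Z := by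
  rcases Z.eq_empty_or_nonempty with rfl | hne
  · exact ⟨fun _ => 1, continuous_const, fun _ => one_pos, fun _ _ _ => Set.notMem_empty _⟩
  refine ⟨fun x => Metric.infDist (g x) Z, (Metric.continuous_infDist_pt Z).comp hg,
    fun x => (hZ.notMem_iff_infDist_pos hne).mp (hgZ x), fun x y hy hyZ => ?_⟩
  exact (Metric.infDist_le_dist_of_mem hyZ).not_gt hy

theorem stmt_5_general (X : Type) [TopologicalSpace X]
    (Y : Type) [MetricSpace Y] (Z₁ Z₂ : Set Y)
    (hZ₁c : IsClosed Z₁)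
    (hZ₁ : Avoidable X Z₁) (hZ₂ : Avoidable X Z₂) :
    Avoidable X (Z₁ ∪ Z₂) := by
  intro f hf ε hε hεpos
  obtain ⟨g₁, hg₁, hg₁Z⟩ := hZ₁ f hf (fun x => ε x / 2) (hε.div_const 2)
    (fun x => half_pos (hεpos x))
  obtain ⟨δ, hδc, hδpos, hδ⟩ :=
    hZ₁c.exists_continuous_pos_margin hg₁ (fun x => (hg₁Z x).1)
  obtain ⟨g₂, hg₂, hg₂Z⟩ := hZ₂ g₁ hg₁ (fun x => min (ε x / 2) (δ x))
    ((hε.div_const 2).min hδc) (fun x => lt_min (half_pos (hεpos x)) (hδpos x))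
  refine ⟨g₂, hg₂, fun x => ⟨?_, ?_⟩⟩
  · rintro (h₁ | h₂)
    · exact hδ x (g₂ x) ((hg₂Z x).2.trans_le (min_le_right _ _)) h₁
    · exact (hg₂Z x).1 h₂
  · calc dist (f x) (g₂ x) ≤ dist (f x) (g₁ x) + dist (g₁ x) (g₂ x) := dist_triangle _ _ _
      _ < ε x / 2 + ε x / 2 :=
          add_lt_add (hg₁Z x).2 ((hg₂Z x).2.trans_le (min_le_left _ _))
      _ = ε x := add_halves _

theorem stmt_5 (X : Type) [TopologicalSpace X] [NormalSpace X]
    (Y : Type) [MetricSpace Y] (Z₁ Z₂ : Set Y)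
    (hZ₁c : IsClosed Z₁) (hZ₂c : IsClosed Z₂)
    (hZ₁ : Avoidable X Z₁) (hZ₂ : Avoidable X Z₂) :
    Avoidable X (Z₁ ∪ Z₂) :=
  stmt_5_general X Y Z₁ Z₂ hZ₁c hZ₁ hZ₂
end

section
/- Let X be a normal space, Y a metric space, and Z₁,…,Z_k finitely many closed subsets of Y, each X-avoidable. Then their union Z₁ ∪ ⋯ ∪ Z_k is X-avoidable. -/
/-! First move `f` by less than `ε / 2` off the closed set `Z₁`, then move the result off `Z₂`
by less than its distance to `Z₁` (and less than `ε / 2`), so the second move cannot fall back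
into `Z₁`. Closedness of `Z₁` is what makes that distance a positive continuous error function. -/

namespace Avoidable

variable {X Y : Type} [TopologicalSpace X] [MetricSpace Y]

theorem empty : Avoidable X (∅ : Set Y) :=
  fun f hf _ _ hεpos => ⟨f, hf, fun x => ⟨Set.notMem_empty _, by simpa using hεpos x⟩⟩

theorem union {Z₁ Z₂ : Set Y} (h₁c : IsClosed Z₁) (h₁ : Avoidable X Z₁) (h₂ : Avoidable X Z₂) :
    Avoidable X (Z₁ ∪ Z₂) := by
  -- `Metric.infDist y ∅ = 0`, so the empty case is split off.
  rcases Z₁.eq_empty_or_nonempty with rfl | hne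
  · simpa using h₂
  intro f hf ε hε hεpos
  obtain ⟨g₁, hg₁, hg₁p⟩ := h₁ f hf (ε · / 2) (hε.div_const 2) (fun x => half_pos (hεpos x))
  obtain ⟨hg₁Z, hfg₁⟩ := forall_and.1 hg₁p
  set δ : X → ℝ := fun x => min (ε x / 2) (Metric.infDist (g₁ x) Z₁)
  have hδ : Continuous δ := (hε.div_const 2).min ((Metric.continuous_infDist_pt Z₁).comp hg₁)
  have hδpos : ∀ x, 0 < δ x := fun x =>
    lt_min (half_pos (hεpos x)) ((h₁c.notMem_iff_infDist_pos hne).1 (hg₁Z x))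
  obtain ⟨g, hg, hgp⟩ := h₂ g₁ hg₁ δ hδ hδpos
  obtain ⟨hgZ₂, hg₁g⟩ := forall_and.1 hgp
  refine ⟨g, hg, fun x => ⟨?_, ?_⟩⟩
  · rintro (hmem | hmem)
    · have : δ x ≤ dist (g₁ x) (g x) :=
        (min_le_right _ _).trans (Metric.infDist_le_dist_of_mem hmem)
      exact (hg₁g x).not_ge this
    · exact hgZ₂ x hmem
  · calc dist (f x) (g x) ≤ dist (f x) (g₁ x) + dist (g₁ x) (g x) := dist_triangle _ _ _
      _ < ε x / 2 + δ x := add_lt_add (hfg₁ x) (hg₁g x)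
      _ ≤ ε x / 2 + ε x / 2 := by gcongr; exact min_le_left _ _
      _ = ε x := add_halves _

theorem biUnion_finset {ι : Type} {Z : ι → Set Y} (hZc : ∀ i, IsClosed (Z i))
    (hZ : ∀ i, Avoidable X (Z i)) (s : Finset ι) : Avoidable X (⋃ i ∈ s, Z i) := by
  classical
  induction s using Finset.induction_on with
  | empty => simpa using empty
  | insert i s _ ih => simpa only [Finset.set_biUnion_insert] using union (hZc i) (hZ i) ih

theorem iUnion {ι : Type} [Finite ι] {Z : ι → Set Y} (hZc : ∀ i, IsClosed (Z i))
    (hZ : ∀ i, Avoidable X (Z i)) : Avoidable X (⋃ i, Z i) := by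
  have := Fintype.ofFinite ι
  simpa using biUnion_finset hZc hZ Finset.univ

end Avoidable

theorem stmt_6_general (X : Type) [TopologicalSpace X]
    (Y : Type) [MetricSpace Y] (k : ℕ) (Z : Fin k → Set Y)
    (hZc : ∀ i, IsClosed (Z i)) (hZ : ∀ i, Avoidable X (Z i)) :
    Avoidable X (⋃ i, Z i) :=
  Avoidable.iUnion hZc hZ

theorem stmt_6 (X : Type) [TopologicalSpace X] [NormalSpace X]
    (Y : Type) [MetricSpace Y] (k : ℕ) (Z : Fin k → Set Y)
    (hZc : ∀ i, IsClosed (Z i)) (hZ : ∀ i, Avoidable X (Z i)) :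
    Avoidable X (⋃ i, Z i) :=
  stmt_6_general X Y k Z hZc hZ
end

section
/- Let X be a normal, locally compact space, Y a complete metric space, and (Z_i)_{i∈ℕ} a countable family of closed subsets of Y, each X-avoidable. Then the union ⋃_{i∈ℕ} Z_i is X-avoidable. -/
open Metric Filter Topology

lemma le_div_two_pow_of_le_half {e : ℕ → ℝ} (he : ∀ n, e (n + 1) ≤ e n / 2) (m n : ℕ) :
    e (m + n) ≤ e n / 2 ^ m := by
  induction m with
  | zero => simp
  | succ m ih =>
    calc e (m + 1 + n) ≤ e (m + n) / 2 := by rw [Nat.succ_add]; exact he (m + n)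
      _ ≤ e n / 2 ^ m / 2 := by gcongr
      _ = e n / 2 ^ (m + 1) := by rw [pow_succ, div_div]

section HalvingSteps

variable {α : Type*} [PseudoMetricSpace α] {u : ℕ → α} {e : ℕ → ℝ}

lemma cauchySeq_of_dist_succ_le_of_le_half (hd : ∀ n, dist (u n) (u (n + 1)) ≤ e n)
    (he : ∀ n, e (n + 1) ≤ e n / 2) : CauchySeq u :=
  cauchySeq_of_le_geometric_two (C := 2 * e 0) fun n => by
    simpa using (hd n).trans (le_div_two_pow_of_le_half he n 0)

lemma dist_le_two_mul_of_dist_succ_le_of_le_half (hd : ∀ n, dist (u n) (u (n + 1)) ≤ e n)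
    (he : ∀ n, e (n + 1) ≤ e n / 2) {a : α} (ha : Tendsto u atTop (𝓝 a)) (n : ℕ) :
    dist (u n) a ≤ 2 * e n := by
  have hshift : ∀ m, dist (u (m + n)) (u (m + 1 + n)) ≤ 2 * e n / 2 / 2 ^ m := fun m => by
    simpa [Nat.succ_add] using (hd (m + n)).trans (le_div_two_pow_of_le_half he m n)
  simpa using dist_le_of_le_geometric_two_of_tendsto₀ hshift ((tendsto_add_atTop_iff_nat n).2 ha)

end HalvingSteps

lemma tendstoLocallyUniformly_of_dist_le_mul {ι X Y : Type*} [TopologicalSpace X]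
    [PseudoMetricSpace Y] {p : Filter ι} {F : ι → X → Y} {f : X → Y} {c : X → ℝ}
    {r : ι → ℝ} (hc : Continuous c) (hr : Tendsto r p (𝓝 0)) (hr0 : ∀ i, 0 ≤ r i)
    (h : ∀ i x, dist (f x) (F i x) ≤ c x * r i) : TendstoLocallyUniformly F f p := by
  rw [Metric.tendstoLocallyUniformly_iff]
  intro δ hδ x
  have hsmall : Tendsto (fun i => (c x + 1) * r i) p (𝓝 0) := by
    simpa using hr.const_mul (c x + 1)
  refine ⟨{y | c y < c x + 1},
    hc.continuousAt.eventually_lt continuousAt_const (lt_add_one _), ?_⟩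
  filter_upwards [hsmall.eventually (gt_mem_nhds hδ)] with i hi y hy
  calc dist (f y) (F i y) ≤ c y * r i := h i y
    _ ≤ (c x + 1) * r i := by gcongr; exact hr0 i
    _ < δ := hi

lemma exists_continuous_limit_of_dist_succ_le_of_le_half {X Y : Type*} [TopologicalSpace X]
    [PseudoMetricSpace Y] [CompleteSpace Y] {g : ℕ → X → Y} {e : ℕ → X → ℝ}
    (hg : ∀ n, Continuous (g n)) (he0 : Continuous (e 0))
    (hd : ∀ n x, dist (g n x) (g (n + 1) x) ≤ e n x) (he : ∀ n x, e (n + 1) x ≤ e n x / 2) :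
    ∃ L : X → Y, Continuous L ∧ ∀ n x, dist (g n x) (L x) ≤ 2 * e n x := by
  choose L hL using fun x =>
    cauchySeq_tendsto_of_complete (cauchySeq_of_dist_succ_le_of_le_half (hd · x) (he · x))
  have hdist n x : dist (g n x) (L x) ≤ 2 * e n x :=
    dist_le_two_mul_of_dist_succ_le_of_le_half (hd · x) (he · x) (hL x) n
  have hunif : TendstoLocallyUniformly g L atTop := by
    refine tendstoLocallyUniformly_of_dist_le_mul (c := fun x => 2 * e 0 x)
      (r := fun n => 1 / 2 ^ n) (by fun_prop) ?_ (fun n => by positivity) fun n x => ?_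
    · exact tendsto_const_nhds.div_atTop (tendsto_pow_atTop_atTop_of_one_lt one_lt_two)
    · calc dist (L x) (g n x) ≤ 2 * e n x := dist_comm (L x) _ ▸ hdist n x
        _ ≤ 2 * (e 0 x / 2 ^ n) := by
          gcongr; exact le_div_two_pow_of_le_half (e := (e · x)) (he · x) n 0
        _ = 2 * e 0 x * (1 / 2 ^ n) := by ring
  exact ⟨L, hunif.continuous (Frequently.of_forall hg), hdist⟩

structure BudgetedMap (X Y : Type*) [TopologicalSpace X] [PseudoMetricSpace Y] where
  map : X → Y
  budget : X → ℝ
  continuous_map : Continuous map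
  continuous_budget : Continuous budget
  budget_pos : ∀ x, 0 < budget x

lemma Avoidable.exists_refinement {X Y : Type} [TopologicalSpace X] [MetricSpace Y]
    {Z : Set Y} (hZ : Avoidable X Z) (hZc : IsClosed Z) (p : BudgetedMap X Y) :
    ∃ q : BudgetedMap X Y, (∀ x, dist (p.map x) (q.map x) < p.budget x) ∧
      (∀ x, q.budget x ≤ p.budget x / 2) ∧
      ∀ x, Disjoint (closedBall (q.map x) (2 * q.budget x)) Z := by
  obtain ⟨g, hg, hgZ⟩ := hZ p.map p.continuous_map p.budget p.continuous_budget p.budget_pos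
  have hp := p.budget_pos
  have hcp := p.continuous_budget
  rcases Z.eq_empty_or_nonempty with rfl | hne
  · exact ⟨⟨g, fun x => p.budget x / 2, hg, by fun_prop, fun x => half_pos (hp x)⟩,
      fun x => (hgZ x).2, fun x => le_rfl, fun x => Set.disjoint_empty _⟩
  have hpos x : 0 < infDist (g x) Z := (hZc.notMem_iff_infDist_pos hne).1 (hgZ x).1
  -- a quarter of the distance to `Z` keeps the closed ball of twice the budget off `Z`
  refine ⟨⟨g, fun x => min (p.budget x / 2) (infDist (g x) Z / 4), hg, by fun_prop,
      fun x => lt_min (half_pos (hp x)) (by linarith [hpos x])⟩,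
    fun x => (hgZ x).2, fun x => min_le_left _ _, fun x => Set.disjoint_left.2 fun y hy hyZ => ?_⟩
  have hball : dist y (g x) ≤ 2 * min (p.budget x / 2) (infDist (g x) Z / 4) := hy
  have hmin := min_le_right (p.budget x / 2) (infDist (g x) Z / 4)
  linarith [infDist_le_dist_of_mem hyZ (x := g x), dist_comm y (g x), hpos x]

theorem stmt_7_general (X : Type) [TopologicalSpace X]
    (Y : Type) [MetricSpace Y] [CompleteSpace Y] (Z : ℕ → Set Y)
    (hZc : ∀ i, IsClosed (Z i)) (hZ : ∀ i, Avoidable X (Z i)) :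
    Avoidable X (⋃ i, Z i) := by
  intro f hf ε hε hεp
  choose next hnext_dist hnext_half hnext_disj using
    fun n (p : BudgetedMap X Y) => (hZ n).exists_refinement (hZc n) p
  let s : ℕ → BudgetedMap X Y := fun n =>
    Nat.rec ⟨f, fun x => ε x / 4, hf, by fun_prop, fun x => by linarith [hεp x]⟩ next n
  obtain ⟨L, hL, hdist⟩ := exists_continuous_limit_of_dist_succ_le_of_le_half
    (fun n => (s n).continuous_map) (s 0).continuous_budget
    (fun n x => (hnext_dist n (s n) x).le) (fun n x => hnext_half n (s n) x)
  refine ⟨L, hL, fun x => ⟨?_, ?_⟩⟩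
  · simp only [Set.mem_iUnion, not_exists]
    exact fun n => Set.disjoint_left.1 (hnext_disj n (s n) x) (mem_closedBall'.2 (hdist (n + 1) x))
  · have h0 : dist (f x) (L x) ≤ 2 * (ε x / 4) := hdist 0 x
    linarith [hεp x]

theorem stmt_7 (X : Type) [TopologicalSpace X] [NormalSpace X] [LocallyCompactSpace X]
    (Y : Type) [MetricSpace Y] [CompleteSpace Y] (Z : ℕ → Set Y)
    (hZc : ∀ i, IsClosed (Z i)) (hZ : ∀ i, Avoidable X (Z i)) :
    Avoidable X (⋃ i, Z i) :=
  stmt_7_general X Y Z hZc hZ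
end

section
/- Let X be a perfectly normal space, C ⊆ X closed with complement X', let Y be a metric space, and Z ⊆ Y an X'-avoidable subset. Let f : X → Y be continuous with f(x) ∉ Z for all x ∈ C, and let ε : X → ℝ_{>0} be continuous. Then there exists a continuous g : X → Y with g(x) = f(x) for all x ∈ C, and g(x) ∉ Z and d(f(x), g(x)) < ε(x) for all x ∈ X. -/
/-!
Perfect normality writes `C` as the zero set of a continuous `φ ≥ 0`. Perturbing `f` on `Cᶜ`
within `min ε φ` gives a map missing `Z` there; extended by `f` on `C` it stays continuous at the
points of `C`, because its distance to `f` is at most `φ`, which vanishes on `C`.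
-/

open Set Filter Topology

theorem continuous_of_continuousOn_of_dist_le {X Y : Type*} [TopologicalSpace X] [MetricSpace Y]
    {U : Set X} (hU : IsOpen U) {f g : X → Y} (hf : Continuous f) (hg : ContinuousOn g U)
    {φ : X → ℝ} (hφ : Continuous φ) (hφU : ∀ x ∉ U, φ x = 0)
    (hdist : ∀ x, dist (f x) (g x) ≤ φ x) : Continuous g := by
  refine continuous_iff_continuousAt.2 fun x => ?_
  by_cases hx : x ∈ U
  · exact hg.continuousAt (hU.mem_nhds hx)
  · have hgx : g x = f x := (dist_le_zero.1 (hφU x hx ▸ hdist x)).symm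
    have hφx : Tendsto φ (𝓝 x) (𝓝 0) := hφU x hx ▸ hφ.tendsto x
    rw [ContinuousAt, hgx]
    exact (hf.tendsto x).congr_dist (squeeze_zero (fun _ => dist_nonneg) hdist hφx)

theorem continuous_dite_compl_of_dist_le {X Y : Type*} [TopologicalSpace X] [MetricSpace Y]
    {C : Set X} [DecidablePred (· ∈ C)] (hC : IsClosed C) {f : X → Y} (hf : Continuous f)
    {g : ↥(Cᶜ) → Y} (hg : Continuous g) {φ : X → ℝ} (hφ : Continuous φ)
    (hφC : ∀ x ∈ C, φ x = 0) (hdist : ∀ x : ↥(Cᶜ), dist (f x) (g x) ≤ φ x) :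
    Continuous fun x => if hx : x ∈ C then f x else g ⟨x, hx⟩ := by
  have hglue : Cᶜ.domRestrict (fun x => if hx : x ∈ C then f x else g ⟨x, hx⟩) = g :=
    funext fun x => dif_neg x.2
  refine continuous_of_continuousOn_of_dist_le hC.isOpen_compl hf ?_ hφ
    (fun x hx => hφC x (not_not.1 hx)) fun x => ?_
  · rwa [continuousOn_iff_continuous_domRestrict, hglue]
  · by_cases hx : x ∈ C
    · simp [hx, hφC x hx]
    · simpa [hx] using hdist ⟨x, hx⟩

theorem stmt_8 (X : Type) [TopologicalSpace X] [PerfectlyNormalSpace X]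
    (C : Set X) (hC : IsClosed C)
    (Y : Type) [MetricSpace Y] (Z : Set Y)
    (hZ : Avoidable ↥(Cᶜ) Z)
    (f : X → Y) (hf : Continuous f) (hfC : ∀ x ∈ C, f x ∉ Z)
    (ε : X → ℝ) (hε : Continuous ε) (hεpos : ∀ x, 0 < ε x) :
    ∃ g : X → Y, Continuous g ∧ (∀ x ∈ C, g x = f x) ∧
      ∀ x, g x ∉ Z ∧ dist (f x) (g x) < ε x := by
  classical
  obtain ⟨φ, hCφ, hφ01⟩ := perfectlyNormalSpace_iff_forall_isClosed_preimage_zero.1 ‹_› C hC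
  have hφC : ∀ x ∈ C, φ x = 0 := fun x hx => by rwa [hCφ] at hx
  have hφpos : ∀ x ∉ C, 0 < φ x := fun x hx =>
    (hφ01 x).1.lt_of_ne' fun h => hx (by rwa [hCφ])
  obtain ⟨g₀, hg₀, hg₀spec⟩ := hZ (fun x => f x) (hf.comp continuous_subtype_val)
    (fun x => min (ε x) (φ x)) ((hε.min φ.continuous).comp continuous_subtype_val)
    (fun x => lt_min (hεpos x) (hφpos x x.2))
  refine ⟨_, continuous_dite_compl_of_dist_le hC hf hg₀ φ.continuous hφC
    fun x => (hg₀spec x).2.le.trans (min_le_right _ _), fun x hx => dif_pos hx, fun x => ?_⟩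
  by_cases hx : x ∈ C
  · simpa [hx] using ⟨hfC x hx, hεpos x⟩
  · simpa [hx] using ⟨(hg₀spec ⟨x, hx⟩).1, (hg₀spec ⟨x, hx⟩).2.trans_le (min_le_left _ _)⟩
end

section
/- Let X be a normal space of covering dimension at most 1. For any continuous map f : X → ℂ and any continuous ε : X → ℝ_{>0}, there exists a continuous g : X → ℂ with g(x) ≠ 0 and |f(x) − g(x)| < ε(x) for all x ∈ X. In particular, invertible-valued perturbations of complex-valued functions exist on 1-dimensional normal spaces. -/
open Set

theorem Set.exists_subset_pair_of_ncard_le_two {α : Type*} {s : Set α} (hs : s.Nonempty)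
    (hfin : s.Finite) (h2 : s.ncard ≤ 2) : ∃ a ∈ s, ∃ b ∈ s, s ⊆ {a, b} := by
  have hpos := (ncard_pos hfin).2 hs
  obtain h1 | h2 : s.ncard = 1 ∨ s.ncard = 2 := by omega
  · obtain ⟨a, rfl⟩ := ncard_eq_one.1 h1
    exact ⟨a, rfl, a, rfl, subset_insert a {a}⟩
  · obtain ⟨a, b, -, rfl⟩ := ncard_eq_two.1 h2
    exact ⟨a, mem_insert a {b}, b, mem_insert_of_mem a rfl, subset_rfl⟩

theorem CovDimLE.exists_shrinking {X : Type} [TopologicalSpace X] {n : ℕ} (hX : CovDimLE X n)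
    {ι : Type*} {U : ι → Set X} (hUo : ∀ i, IsOpen (U i)) (hU : ⋃ i, U i = univ) :
    ∃ G : ι → Set X, (∀ i, IsOpen (G i)) ∧ (∀ i, G i ⊆ U i) ∧ ⋃ i, G i = univ ∧
      ∀ x, {i | x ∈ G i}.Finite ∧ {i | x ∈ G i}.ncard ≤ n + 1 := by
  obtain ⟨𝒱, hVo, hVcov, hVU, hVpt⟩ :=
    hX (range U) (forall_mem_range.2 hUo) (by rwa [sUnion_range])
  have hidx (V : 𝒱) : ∃ i, (V : Set X) ⊆ U i := by
    obtain ⟨_, ⟨i, rfl⟩, hVi⟩ := hVU V V.2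
    exact ⟨i, hVi⟩
  choose idx hidx using hidx
  refine ⟨fun i => ⋃ (V : 𝒱) (_ : idx V = i), V, fun i => ?_, fun i => ?_, ?_, fun x => ?_⟩
  · exact isOpen_iUnion fun V => isOpen_iUnion fun _ => hVo V V.2
  · exact iUnion₂_subset fun V hV => hV ▸ hidx V
  · refine eq_univ_of_forall fun x => ?_
    obtain ⟨V, hV, hxV⟩ := hVcov.symm ▸ mem_univ x
    exact mem_iUnion.2 ⟨idx ⟨V, hV⟩, mem_iUnion₂.2 ⟨⟨V, hV⟩, rfl, hxV⟩⟩
  · set S : Set 𝒱 := Subtype.val ⁻¹' {V ∈ 𝒱 | x ∈ V}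
    have himage : {i | x ∈ ⋃ (V : 𝒱) (_ : idx V = i), (V : Set X)} = idx '' S := by
      ext i
      simp [S, and_comm]
    have hScard : S.ncard = {V ∈ 𝒱 | x ∈ V}.ncard :=
      ncard_preimage_of_injective_subset_range Subtype.val_injective
        fun V hV => ⟨⟨V, hV.1⟩, rfl⟩
    have hSfin : S.Finite := (hVpt x).1.preimage Subtype.val_injective.injOn
    rw [himage]
    exact ⟨hSfin.image idx, (ncard_image_le hSfin).trans (hScard ▸ (hVpt x).2)⟩

theorem CovDimLE.exists_continuous_ne_zero_norm_sub_le {X : Type} [TopologicalSpace X]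
    [NormalSpace X] (hX : CovDimLE X 1) {E ι : Type*} [NormedAddCommGroup E] [NormedSpace ℝ E]
    [Finite ι] {U : ι → Set E} {c : ι → E → E} {r : ℝ} (hUo : ∀ i, IsOpen (U i))
    (hU : ⋃ i, U i = univ) (hc : ∀ i, ContinuousOn (c i) (U i))
    (hcr : ∀ i, ∀ z ∈ U i, ‖z - c i z‖ ≤ r)
    (hc0 : ∀ i j, ∀ z ∈ U i, z ∈ U j → (0 : E) ∉ segment ℝ (c i z) (c j z))
    {h : X → E} (hh : Continuous h) :
    ∃ k : X → E, Continuous k ∧ ∀ x, k x ≠ 0 ∧ ‖h x - k x‖ ≤ r := by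
  obtain ⟨G, hGo, hGU, hGcov, hGpt⟩ := hX.exists_shrinking (fun i => (hUo i).preimage hh)
    (by simp only [← preimage_iUnion, hU, preimage_univ])
  obtain ⟨ρ, hρ⟩ := PartitionOfUnity.exists_isSubordinate_of_locallyFinite isClosed_univ G hGo
    (locallyFinite_of_finite G) hGcov.ge
  have hρG {i x} (hx : ρ i x ≠ 0) : x ∈ G i := hρ i (subset_closure hx)
  refine ⟨fun x => ∑ᶠ i, ρ i x • c i (h x),
    hρ.continuous_finsum_smul hGo fun i => (hc i).comp hh.continuousOn (hGU i), fun x => ⟨?_, ?_⟩⟩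
  · obtain ⟨i, hi⟩ := ρ.exists_pos (mem_univ x)
    obtain ⟨i, hi, j, hj, hij⟩ := exists_subset_pair_of_ncard_le_two ⟨i, hρG hi.ne'⟩
      (hGpt x).1 (hGpt x).2
    have hseg : ∑ᶠ i, ρ i x • c i (h x) ∈ segment ℝ (c i (h x)) (c j (h x)) := by
      refine ρ.finsum_smul_mem_convex (g := fun i x => c i (h x)) (mem_univ x) (fun l hl => ?_)
        (convex_segment _ _)
      rcases hij (hρG hl) with rfl | rfl
      exacts [left_mem_segment _ _ _, right_mem_segment _ _ _]
    exact fun h0 => hc0 i j (h x) (hGU i hi) (hGU j hj) (h0 ▸ hseg)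
  · have hball : ∑ᶠ i, ρ i x • c i (h x) ∈ Metric.closedBall (h x) r :=
      ρ.finsum_smul_mem_convex (g := fun i x => c i (h x)) (mem_univ x)
        (fun i hi => by simpa [dist_eq_norm'] using hcr i (h x) (hGU i (hρG hi)))
        (convex_closedBall _ _)
    simpa [dist_eq_norm'] using hball

open Complex Metric

noncomputable def puncturingCenter : Fin 3 → ℂ := ![1 / 4, I / 4, -(1 + I) / 4]

lemma quarter_le_norm_puncturingCenter (k : Fin 3) : 1 / 4 ≤ ‖puncturingCenter k‖ := by
  fin_cases k
  · simp [puncturingCenter]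
  · simp [puncturingCenter]
  · calc (1 / 4 : ℝ) = |(puncturingCenter 2).re| := by simp [puncturingCenter]; norm_num
      _ ≤ _ := abs_re_le_norm _

lemma zero_notMem_segment_puncturingCenter (k l : Fin 3) :
    (0 : ℂ) ∉ segment ℝ (puncturingCenter k) (puncturingCenter l) := by
  rintro ⟨a, b, ha, hb, hab, h0⟩
  have hre := congrArg re h0
  have him := congrArg im h0
  fin_cases k <;> fin_cases l <;> simp [puncturingCenter] at hre him <;> linarith

lemma exists_mem_ball_puncturingCenter {z : ℂ} (hz : ‖z‖ ≤ 1 / 4) :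
    ∃ k, z ∈ ball (puncturingCenter k) (1 / 2) := by
  have hsq : z.re ^ 2 + z.im ^ 2 ≤ (1 / 4) ^ 2 := by
    rw [sq, sq, ← normSq_apply, ← Complex.sq_norm]
    gcongr
  suffices ∃ k, ‖z - puncturingCenter k‖ ^ 2 < (1 / 2) ^ 2 from
    this.imp fun k hk => by
      rw [mem_ball, dist_eq]
      exact lt_of_pow_lt_pow_left₀ 2 (by norm_num) hk
  simp only [Complex.sq_norm, normSq_apply]
  rcases le_or_gt 0 z.re with hre | hre
  · exact ⟨0, by simp [puncturingCenter]; nlinarith⟩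
  rcases le_or_gt 0 z.im with him | him
  · exact ⟨1, by simp [puncturingCenter]; nlinarith⟩
  · exact ⟨2, by simp [puncturingCenter]; nlinarith⟩

noncomputable def puncturingCover : Option (Fin 3) → Set ℂ
  | none => {z | 1 / 4 < ‖z‖}
  | some k => ball (puncturingCenter k) (1 / 2)

noncomputable def puncturingMap : Option (Fin 3) → ℂ → ℂ
  | none => id
  | some k => fun _ => puncturingCenter k

lemma isOpen_puncturingCover : ∀ i, IsOpen (puncturingCover i)
  | none => isOpen_lt continuous_const continuous_norm
  | some _ => isOpen_ball

lemma iUnion_puncturingCover : ⋃ i, puncturingCover i = univ := by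
  refine eq_univ_of_forall fun z => mem_iUnion.2 ?_
  rcases lt_or_ge (1 / 4) ‖z‖ with hz | hz
  · exact ⟨none, hz⟩
  · obtain ⟨k, hk⟩ := exists_mem_ball_puncturingCenter hz
    exact ⟨some k, hk⟩

lemma continuous_puncturingMap : ∀ i, Continuous (puncturingMap i)
  | none => continuous_id
  | some _ => continuous_const

lemma norm_sub_puncturingMap_le : ∀ i, ∀ z ∈ puncturingCover i, ‖z - puncturingMap i z‖ ≤ 1 / 2
  | none, _, _ => by simp [puncturingMap]
  | some _, _, hz => by simpa [puncturingMap, ← dist_eq_norm] using (mem_ball.1 hz).le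

-- `0` on the segment from `z` to a center `c` would give `‖z - c‖ = ‖z‖ + ‖c‖ > 1/2`.
lemma zero_notMem_segment_puncturingMap :
    ∀ i j, ∀ z ∈ puncturingCover i, z ∈ puncturingCover j →
      (0 : ℂ) ∉ segment ℝ (puncturingMap i z) (puncturingMap j z)
  | none, none, z, hz, _, h0 => by
    have hz : 1 / 4 < ‖z‖ := hz
    simp only [puncturingMap, id, segment_same, mem_singleton_iff] at h0
    rw [← h0, norm_zero] at hz
    norm_num at hz
  | none, some k, z, hz, hzk, h0 => by
    have hz : 1 / 4 < ‖z‖ := hz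
    have := dist_add_dist_of_mem_segment h0
    simp only [puncturingMap, id, dist_zero_right, dist_zero_left] at this
    linarith [mem_ball.1 hzk, quarter_le_norm_puncturingCenter k]
  | some k, none, z, hzk, hz, h0 => by
    have hz : 1 / 4 < ‖z‖ := hz
    have := dist_add_dist_of_mem_segment h0
    simp only [puncturingMap, id, dist_zero_right, dist_zero_left] at this
    linarith [mem_ball'.1 hzk, quarter_le_norm_puncturingCenter k]
  | some k, some l, _, _, _, h0 => zero_notMem_segment_puncturingCenter k l h0

theorem stmt_10 (X : Type) [TopologicalSpace X] [NormalSpace X]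
    (hdim : CovDimLE X 1)
    (f : X → ℂ) (hf : Continuous f)
    (ε : X → ℝ) (hε : Continuous ε) (hεpos : ∀ x, 0 < ε x) :
    ∃ g : X → ℂ, Continuous g ∧ ∀ x, g x ≠ 0 ∧ ‖f x - g x‖ < ε x := by
  have hε0 (x : X) : (ε x : ℂ) ≠ 0 := ofReal_ne_zero.2 (hεpos x).ne'
  obtain ⟨k, hk, hfk⟩ := hdim.exists_continuous_ne_zero_norm_sub_le isOpen_puncturingCover
    iUnion_puncturingCover (fun i => (continuous_puncturingMap i).continuousOn)
    norm_sub_puncturingMap_le zero_notMem_segment_puncturingMap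
    (hf.div (continuous_ofReal.comp hε) hε0)
  refine ⟨fun x => ε x * k x, (continuous_ofReal.comp hε).mul hk,
    fun x => ⟨mul_ne_zero (hε0 x) (hfk x).1, ?_⟩⟩
  calc ‖f x - ε x * k x‖ = ‖(ε x : ℂ) * (f x / ε x - k x)‖ := by
        rw [mul_sub, mul_div_cancel₀ _ (hε0 x)]
    _ = ε x * ‖f x / ε x - k x‖ := by
        rw [norm_mul, norm_real, Real.norm_of_nonneg (hεpos x).le]
    _ ≤ ε x * (1 / 2) := mul_le_mul_of_nonneg_left (hfk x).2 (hεpos x).le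
    _ < ε x := by linarith [hεpos x]
end

section
/- Let X be a normal space of covering dimension at most n and let n < q ≤ p. Let U ⊆ ℝ^p be open, f : X → U continuous, ε : X → ℝ_{>0} continuous, and Z = U ∩ (ℝ^{p−q} × {0}). Then there exists a continuous g : X → U such that for all x ∈ X, ‖f(x) − g(x)‖ < ε(x) and g(x) ∉ ℝ^{p−q} × {0}. -/
/-!
Choose `δ ≤ ε` continuous with `B(f x, δ x) ⊆ U`, and cover `X` by the open sets where `f` lies
in a ball `B(y_k, r_k)` with `2 r_k < δ`. Covering dimension `≤ n` turns this countable cover into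
a point-finite one of order `≤ n + 1`; shrinking it makes it locally finite, so it carries a
subordinate partition of unity `ρ` with at most `n + 1` functions nonzero at each point.
Choose `w_k ∈ B(y_k, r_k)` recursively in general position modulo `L = ℝ^{p-q} × {0}`: any
`n + 1` of them are linearly independent in `ℝ^p / L`, which has dimension `q > n`; at each step
only finitely many proper subspaces, which are closed and nowhere dense, have to be avoided.
Then `g = ∑ ρ_k w_k` lies in `B(f x, δ x)` by convexity, and is a nontrivial combination of at
most `n + 1` of the `w_k`, hence not in `L`.
-/

open Set Module Metric

theorem exists_seq_forall_mem {α : Type*} (S : ∀ k, (Fin k → α) → Set α)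
    (hS : ∀ k v, (S k v).Nonempty) : ∃ w : ℕ → α, ∀ k, w k ∈ S k fun i => w i := by
  choose c hc using hS
  refine ⟨fun k => Nat.strongRec (fun k w => c k fun i => w i i.isLt) k, fun k => ?_⟩
  dsimp only
  rw [Nat.strongRec_eq]
  exact hc _ _

section Avoidance

variable {E : Type*} [NormedAddCommGroup E] [NormedSpace ℝ E] [FiniteDimensional ℝ E]

theorem IsOpen.exists_mem_forall_notMem_of_ne_top {O : Set E} (hO : IsOpen O) (hne : O.Nonempty)
    (𝒮 : Finset (Submodule ℝ E)) (h𝒮 : ∀ M ∈ 𝒮, M ≠ ⊤) : ∃ a ∈ O, ∀ M ∈ 𝒮, a ∉ M := by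
  have hdense : Dense (⋂ M ∈ 𝒮, (M : Set E)ᶜ) :=
    dense_biInter_of_isOpen (fun M _ => M.closed_of_finiteDimensional.isOpen_compl)
      𝒮.countable_toSet fun M hM => interior_eq_empty_iff_dense_compl.1 <|
        not_nonempty_iff_eq_empty.1 fun h => h𝒮 M hM (M.eq_top_of_nonempty_interior' h)
  obtain ⟨a, haO, ha⟩ := hdense.inter_open_nonempty O hO hne
  exact ⟨a, haO, by simpa using ha⟩

theorem Submodule.sup_span_ne_top {M : Submodule ℝ E} {n : ℕ}
    (hn : finrank ℝ M + n < finrank ℝ E) {t : Finset E} (ht : t.card ≤ n) :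
    M ⊔ Submodule.span ℝ (t : Set E) ≠ ⊤ := by
  intro htop
  have := Submodule.finrank_add_le_finrank_add_finrank M (Submodule.span ℝ (t : Set E))
  rw [htop, finrank_top] at this
  have : finrank ℝ (Submodule.span ℝ (t : Set E)) ≤ t.card := finrank_span_finset_le_card t
  omega

theorem exists_seq_mem_linearIndepOn_mkQ (M : Submodule ℝ E) {n : ℕ}
    (hn : finrank ℝ M + n < finrank ℝ E) {O : ℕ → Set E} (hO : ∀ k, IsOpen (O k))
    (hne : ∀ k, (O k).Nonempty) :
    ∃ w : ℕ → E, (∀ k, w k ∈ O k) ∧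
      ∀ s : Finset ℕ, s.card ≤ n + 1 → LinearIndepOn ℝ (M.mkQ ∘ w) s := by
  classical
  let avoid (k : ℕ) (v : Fin k → E) : Finset (Submodule ℝ E) :=
    ((Finset.univ.image v).powerset.filter (·.card ≤ n)).image
      fun t : Finset E => M ⊔ Submodule.span ℝ (t : Set E)
  obtain ⟨w, hw⟩ := exists_seq_forall_mem (fun k v => {a ∈ O k | ∀ N ∈ avoid k v, a ∉ N})
    fun k v => (hO k).exists_mem_forall_notMem_of_ne_top (hne k) _ <| by
      intro N hN
      obtain ⟨t, ht, rfl⟩ := Finset.mem_image.1 hN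
      exact Submodule.sup_span_ne_top hn (Finset.mem_filter.1 ht).2
  have hgen : ∀ a (s : Finset ℕ), (∀ i ∈ s, i < a) → s.card ≤ n →
      w a ∉ M ⊔ Submodule.span ℝ (w '' s) := by
    intro a s hsa hs
    refine (hw a).2 _ (Finset.mem_image.2 ⟨s.image w, Finset.mem_filter.2 ⟨?_, ?_⟩, by simp⟩)
    · refine Finset.mem_powerset.2 fun _ hy => ?_
      obtain ⟨i, hi, rfl⟩ := Finset.mem_image.1 hy
      exact Finset.mem_image.2 ⟨⟨i, hsa i hi⟩, Finset.mem_univ _, rfl⟩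
    · exact Finset.card_image_le.trans hs
  refine ⟨w, fun k => (hw k).1, fun s => ?_⟩
  induction s using Finset.induction_on_max with
  | empty => simp
  | insert a s hsa ih =>
    intro hcard
    have has : a ∉ s := fun h => lt_irrefl a (hsa a h)
    rw [Finset.card_insert_of_notMem has] at hcard
    rw [Finset.coe_insert, linearIndepOn_insert (by simpa using has)]
    refine ⟨ih (by omega), fun hmem => hgen a s hsa (by omega) ?_⟩
    rwa [← Submodule.comap_map_mkQ, Submodule.mem_comap, Submodule.map_span, ← Set.image_comp]

end Avoidance

theorem PartitionOfUnity.finsum_smul_notMem_of_linearIndepOn_mkQ {X ι E : Type*}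
    [TopologicalSpace X] [AddCommGroup E] [Module ℝ E] (ρ : PartitionOfUnity ι X univ)
    (M : Submodule ℝ E) {w : ι → E} (x : X) (hw : LinearIndepOn ℝ (M.mkQ ∘ w) (ρ.finsupport x)) :
    ∑ᶠ i, ρ i x • w i ∉ M := by
  rw [← ρ.sum_finsupport_smul_eq_finsum (fun i _ => w i)]
  intro hM
  obtain ⟨i, hi, hρi⟩ := Finset.exists_ne_zero_of_sum_ne_zero <|
    (ρ.sum_finsupport (mem_univ x)).trans_ne one_ne_zero
  refine hρi (linearIndepOn_finset_iff.1 hw (ρ · x) ?_ i hi)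
  have : M.mkQ (∑ i ∈ ρ.finsupport x, ρ i x • w i) = 0 := (Submodule.Quotient.mk_eq_zero M).2 hM
  rw [map_sum] at this
  simp_rw [map_smul] at this
  exact this

section Covers

variable {X : Type} [TopologicalSpace X]

theorem CovDimLE.exists_nat_refinement {n : ℕ} (hdim : CovDimLE X n) {W : ℕ → Set X}
    (hWo : ∀ k, IsOpen (W k)) (hWc : ⋃ k, W k = univ) :
    ∃ A : ℕ → Set X, (∀ k, IsOpen (A k)) ∧ (∀ k, A k ⊆ W k) ∧ ⋃ k, A k = univ ∧
      ∀ x, {k | x ∈ A k}.Finite ∧ {k | x ∈ A k}.ncard ≤ n + 1 := by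
  obtain ⟨𝒱, h𝒱o, h𝒱c, h𝒱W, h𝒱fin⟩ :=
    hdim (range W) (forall_mem_range.2 hWo) (by rwa [sUnion_range])
  have : ∀ V, ∃ k, V ∈ 𝒱 → V ⊆ W k := fun V => by
    by_cases hV : V ∈ 𝒱
    · obtain ⟨_, ⟨k, rfl⟩, hVk⟩ := h𝒱W V hV
      exact ⟨k, fun _ => hVk⟩
    · exact ⟨0, fun h => absurd h hV⟩
  choose j hj using this
  have hA : ∀ x, {k | x ∈ ⋃₀ {V ∈ 𝒱 | j V = k}} = j '' {V ∈ 𝒱 | x ∈ V} := fun x => by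
    ext k
    simp only [mem_ofPred_eq, mem_sUnion, mem_image]
    exact ⟨fun ⟨V, ⟨hV, hVk⟩, hxV⟩ => ⟨V, ⟨hV, hxV⟩, hVk⟩,
      fun ⟨V, ⟨hV, hxV⟩, hVk⟩ => ⟨V, ⟨hV, hVk⟩, hxV⟩⟩
  refine ⟨fun k => ⋃₀ {V ∈ 𝒱 | j V = k}, fun k => isOpen_sUnion fun V hV => h𝒱o V hV.1,
    fun k => sUnion_subset fun V ⟨hV, hVk⟩ => hVk ▸ hj V hV, ?_, fun x => ?_⟩
  · refine eq_univ_of_forall fun x => ?_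
    obtain ⟨V, hV, hxV⟩ := mem_sUnion.1 (h𝒱c.symm ▸ mem_univ x : x ∈ ⋃₀ 𝒱)
    exact mem_iUnion.2 ⟨j V, V, ⟨hV, rfl⟩, hxV⟩
  · rw [hA]
    exact ⟨(h𝒱fin x).1.image j, (ncard_image_le (h𝒱fin x).1).trans (h𝒱fin x).2⟩

theorem exists_locallyFinite_refinement_of_pointFinite [NormalSpace X] {A : ℕ → Set X}
    (hAo : ∀ k, IsOpen (A k)) (hAfin : ∀ x, {k | x ∈ A k}.Finite) (hAc : ⋃ k, A k = univ) :
    ∃ G : ℕ → Set X, (∀ k, IsOpen (G k)) ∧ (∀ k, G k ⊆ A k) ∧ LocallyFinite G ∧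
      ⋃ k, G k = univ := by
  obtain ⟨v, hvc, hvo, hvA⟩ :=
    exists_subset_iUnion_closure_subset isClosed_univ hAo (fun x _ => hAfin x) hAc.ge
  -- `G k` omits the closures of the earlier `v i`, so the neighbourhood `v i` meets `G k` only
  -- for `k ≤ i`
  refine ⟨fun k => A k \ ⋃ i ∈ Finset.range k, closure (v i),
    fun k => (hAo k).sdiff (isClosed_biUnion_finset fun i _ => isClosed_closure),
    fun k => sdiff_subset, fun x => ?_, eq_univ_of_forall fun x => ?_⟩
  · obtain ⟨i, hi⟩ := mem_iUnion.1 (hvc (mem_univ x))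
    refine ⟨v i, (hvo i).mem_nhds hi, (finite_le_nat i).subset fun k ⟨y, hyk, hyi⟩ => ?_⟩
    by_contra hik
    exact hyk.2 (mem_biUnion (Finset.mem_range.2 (not_le.1 hik)) (subset_closure hyi))
  · classical
    have hex : ∃ k, x ∈ closure (v k) := (mem_iUnion.1 (hvc (mem_univ x))).imp fun _ h =>
      subset_closure h
    refine mem_iUnion.2 ⟨Nat.find hex, hvA _ (Nat.find_spec hex), ?_⟩
    simp only [mem_iUnion, Finset.mem_range, not_exists]
    exact fun i hi => Nat.find_min hex hi

theorem CovDimLE.exists_partitionOfUnity [NormalSpace X] {n : ℕ} (hdim : CovDimLE X n)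
    {W : ℕ → Set X} (hWo : ∀ k, IsOpen (W k)) (hWc : ⋃ k, W k = univ) :
    ∃ ρ : PartitionOfUnity ℕ X univ, ρ.IsSubordinate W ∧ ∀ x, (ρ.finsupport x).card ≤ n + 1 := by
  obtain ⟨A, hAo, hAW, hAc, hAfin⟩ := hdim.exists_nat_refinement hWo hWc
  obtain ⟨G, hGo, hGA, hGlf, hGc⟩ :=
    exists_locallyFinite_refinement_of_pointFinite hAo (fun x => (hAfin x).1) hAc
  obtain ⟨ρ, hρ⟩ :=
    PartitionOfUnity.exists_isSubordinate_of_locallyFinite isClosed_univ G hGo hGlf hGc.ge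
  refine ⟨ρ, fun k => (hρ k).trans ((hGA k).trans (hAW k)), fun x => ?_⟩
  have hsub : (ρ.finsupport x : Set ℕ) ⊆ {k | x ∈ A k} := fun k hk =>
    hGA k (hρ k (subset_closure (by simpa using hk)))
  rw [← ncard_coe_finset]
  exact (ncard_le_ncard hsub (hAfin x).1).trans (hAfin x).2

end Covers

section Metric

variable {X E : Type*} [PseudoMetricSpace E]

theorem exists_continuous_pos_ball_subset [TopologicalSpace X] {U : Set E} (hU : IsOpen U)
    {f : X → E} (hf : Continuous f) (hfU : ∀ x, f x ∈ U) {ε : X → ℝ} (hε : Continuous ε)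
    (hεpos : ∀ x, 0 < ε x) :
    ∃ δ : X → ℝ, Continuous δ ∧ ∀ x, 0 < δ x ∧ δ x ≤ ε x ∧ ball (f x) (δ x) ⊆ U := by
  rcases Uᶜ.eq_empty_or_nonempty with hUc | hUc
  · exact ⟨ε, hε, fun x => ⟨hεpos x, le_rfl, (compl_empty_iff.1 hUc).symm ▸ subset_univ _⟩⟩
  refine ⟨fun x => min (ε x) (infDist (f x) Uᶜ),
    hε.min ((continuous_infDist_pt _).comp hf), fun x => ⟨?_, min_le_left _ _,
      (ball_subset_ball (min_le_right _ _)).trans ball_infDist_compl_subset⟩⟩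
  refine lt_min (hεpos x) ((infDist_pos_iff_notMem_closure hUc).1 ?_)
  rw [hU.isClosed_compl.closure_eq]
  exact not_not_intro (hfU x)

theorem exists_seq_ball_cover [TopologicalSpace.SeparableSpace E] [Nonempty E] (f : X → E)
    {δ : X → ℝ} (hδpos : ∀ x, 0 < δ x) :
    ∃ (y : ℕ → E) (r : ℕ → ℝ), (∀ k, 0 < r k) ∧
      ⋃ k, f ⁻¹' ball (y k) (r k) ∩ {x | 2 * r k < δ x} = univ := by
  -- balls centred at a dense sequence with radii `1 / (m + 1)`, enumerated through `Nat.pair`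
  let y (k : ℕ) := TopologicalSpace.denseSeq E k.unpair.1
  let r (k : ℕ) : ℝ := 1 / (k.unpair.2 + 1)
  refine ⟨y, r, fun k => Nat.one_div_pos_of_nat, eq_univ_of_forall fun x => ?_⟩
  obtain ⟨m, hm⟩ := exists_nat_one_div_lt (half_pos (hδpos x))
  obtain ⟨a, ha⟩ := (TopologicalSpace.denseRange_denseSeq E).exists_dist_lt (f x)
    (Nat.one_div_pos_of_nat (n := m))
  refine mem_iUnion.2 ⟨Nat.pair a m, ?_, ?_⟩ <;>
    simp only [mem_preimage, mem_ball, mem_ofPred_eq, y, r, Nat.unpair_pair]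
  · exact ha
  · linarith

end Metric

def EuclideanSpace.vanishingOn {ι : Type*} (s : Set ι) : Submodule ℝ (EuclideanSpace ℝ ι) where
  carrier := {v | ∀ i ∈ s, v i = 0}
  add_mem' ha hb i hi := by simp [ha i hi, hb i hi]
  zero_mem' _ _ := rfl
  smul_mem' c v hv i hi := by simp [hv i hi]

theorem EuclideanSpace.finrank_vanishingOn_le {ι : Type*} [Fintype ι] (s : Set ι)
    [Fintype ↥sᶜ] : finrank ℝ (vanishingOn s) ≤ Fintype.card ↥sᶜ := by
  let restrict : vanishingOn s →ₗ[ℝ] (↥sᶜ → ℝ) :=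
    { toFun v i := (v : EuclideanSpace ℝ ι) i
      map_add' _ _ := rfl
      map_smul' _ _ := rfl }
  have hinj : Function.Injective restrict := fun v w h => by
    ext i
    by_cases hi : i ∈ s
    · rw [v.2 i hi, w.2 i hi]
    · exact congrFun h ⟨i, hi⟩
  simpa using LinearMap.finrank_le_finrank_of_injective hinj

theorem EuclideanSpace.finrank_vanishingOn_last_le (p q : ℕ) :
    finrank ℝ (vanishingOn {i : Fin p | p - q ≤ (i : ℕ)}) ≤ p - q := by
  refine (finrank_vanishingOn_le _).trans_eq ?_
  rw [Fintype.card_subtype]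
  simp only [mem_compl_iff, mem_ofPred_eq, not_le, Fin.card_filter_val_lt]
  omega

theorem stmt_13 (n q p : ℕ) (hnq : n < q) (hqp : q ≤ p)
    (X : Type) [TopologicalSpace X] [NormalSpace X] (hdim : CovDimLE X n)
    (U : Set (EuclideanSpace ℝ (Fin p))) (hU : IsOpen U)
    (S : Set (EuclideanSpace ℝ (Fin p)))
    (hS : S = {v : EuclideanSpace ℝ (Fin p) | ∀ i : Fin p, p - q ≤ (i : ℕ) → v i = 0})
    (f : X → EuclideanSpace ℝ (Fin p)) (hf : Continuous f) (hfU : ∀ x, f x ∈ U)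
    (ε : X → ℝ) (hε : Continuous ε) (hεpos : ∀ x, 0 < ε x) :
    ∃ g : X → EuclideanSpace ℝ (Fin p), Continuous g ∧
      ∀ x, g x ∈ U ∧ ‖f x - g x‖ < ε x ∧ g x ∉ S := by
  obtain ⟨δ, hδ, hδx⟩ := exists_continuous_pos_ball_subset hU hf hfU hε hεpos
  obtain ⟨y, r, hr, hcover⟩ := exists_seq_ball_cover f fun x => (hδx x).1
  obtain ⟨ρ, hρW, hρcard⟩ := hdim.exists_partitionOfUnity
    (fun k => (isOpen_ball.preimage hf).inter (isOpen_lt continuous_const hδ)) hcover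
  have hM : finrank ℝ (EuclideanSpace.vanishingOn {i : Fin p | p - q ≤ (i : ℕ)}) + n <
      finrank ℝ (EuclideanSpace ℝ (Fin p)) := by
    rw [finrank_euclideanSpace_fin]
    have := EuclideanSpace.finrank_vanishingOn_last_le p q
    omega
  obtain ⟨w, hwy, hw⟩ := exists_seq_mem_linearIndepOn_mkQ _ hM
    (O := fun k => ball (y k) (r k)) (fun k => isOpen_ball) fun k => nonempty_ball.2 (hr k)
  refine ⟨fun x => ∑ᶠ i, ρ i x • w i,
    ρ.continuous_finsum_smul fun i x _ => continuousAt_const, fun x => ?_⟩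
  have hnear : ∑ᶠ i, ρ i x • w i ∈ ball (f x) (δ x) := by
    refine ρ.finsum_smul_mem_convex (g := fun i _ => w i) (mem_univ x) (fun i hi => ?_)
      (convex_ball _ _)
    obtain ⟨hfy, hrδ : 2 * r i < δ x⟩ := hρW i (subset_closure hi)
    have hwi := mem_ball.1 (hwy i)
    rw [mem_preimage, mem_ball] at hfy
    rw [mem_ball]
    linarith [dist_triangle (w i) (y i) (f x), dist_comm (y i) (f x)]
  refine ⟨(hδx x).2.2 hnear, ?_, ?_⟩
  · rw [← dist_eq_norm]
    exact (mem_ball'.1 hnear).trans_le (hδx x).2.1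
  · rw [hS]
    exact ρ.finsum_smul_notMem_of_linearIndepOn_mkQ _ x (hw _ (hρcard x))
end
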